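/- arXiv:math/9503224 — 10 statements merged into one kernel-verified Lean document; each statement's English description precedes it below -/
import Mathlib

section
/- The inverse of the upper unitriangular n×n matrix A(t) = Id + (1-t^{-1}) Σ_{i<j} E_{ij} is given by A(t)^{-1} = Id + (1-t) Σ_{i<j} t^{i-j} E_{ij}. -/
open Finset in
private lemma key_sum {K : Type*} [Field K] (t : K) (ht : t ≠ 0) (ht1 : t ≠ 1)
    (n a b : ℕ) (hb : b < n) :
    ∑ j ∈ Finset.range n,
      (if a = j then (1 : K) else if a < j then 1 - t⁻¹ else 0) *
      (if j = b then 1 else if j < b then (1 - t) * t ^ ((j : ℤ) - (b : ℤ)) else 0) =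
      if a = b then 1 else 0 := by
  rcases lt_trichotomy a b with h | h | h
  · -- a < b : the interesting case
    rw [if_neg h.ne]
    have hsub : Finset.Icc a b ⊆ Finset.range n := fun j hj => by
      rw [Finset.mem_Icc] at hj; exact Finset.mem_range.2 (lt_of_le_of_lt hj.2 hb)
    rw [← Finset.sum_subset hsub (fun j _ hj => by
      rw [Finset.mem_Icc, not_and_or, not_le, not_le] at hj
      split_ifs <;> first | omega | ring)]
    rw [← Finset.Ico_add_one_right_eq_Icc, Finset.sum_Ico_succ_top (by omega),
      Finset.sum_eq_sum_Ico_succ_bot h]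
    rw [if_pos rfl, if_neg h.ne, if_pos h, one_mul, if_pos rfl, if_neg (by omega),
      if_pos (by omega), mul_one]
    have hmid : ∑ j ∈ Finset.Ico (a + 1) b,
        (if a = j then (1 : K) else if a < j then 1 - t⁻¹ else 0) *
        (if j = b then 1 else if j < b then (1 - t) * t ^ ((j : ℤ) - (b : ℤ)) else 0) =
        (1 - t⁻¹) * (1 - t) * (t ^ (b : ℤ))⁻¹ * ((t ^ b - t ^ (a + 1)) / (t - 1)) := by
      have : ∀ j ∈ Finset.Ico (a + 1) b,
          (if a = j then (1 : K) else if a < j then 1 - t⁻¹ else 0) *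
          (if j = b then 1 else if j < b then (1 - t) * t ^ ((j : ℤ) - (b : ℤ)) else 0) =
          (1 - t⁻¹) * (1 - t) * (t ^ (b : ℤ))⁻¹ * t ^ j := by
        intro j hj
        rw [Finset.mem_Ico] at hj
        rw [if_neg (by omega), if_pos (by omega), if_neg (by omega), if_pos hj.2]
        rw [zpow_sub₀ ht, zpow_natCast, zpow_natCast]
        field_simp
      rw [Finset.sum_congr rfl this, ← Finset.mul_sum, geom_sum_Ico ht1 (by omega)]
    rw [hmid]
    have hb0 : t ^ b ≠ 0 := pow_ne_zero _ ht
    have ht1' : t - 1 ≠ 0 := sub_ne_zero.2 ht1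
    rw [zpow_sub₀ ht]
    simp only [zpow_natCast]
    field_simp
    ring
  · -- a = b
    subst h
    rw [if_pos rfl]
    rw [Finset.sum_eq_single_of_mem a (Finset.mem_range.2 hb)
      (fun j _ hj => by split_ifs <;> first | omega | ring)]
    rw [if_pos rfl, if_pos rfl, one_mul]
  · -- a > b
    rw [if_neg (by omega)]
    apply Finset.sum_eq_zero
    intro j _
    split_ifs <;> first | omega | ring

/-- The inverse of the upper unitriangular matrix
`A(t) = Id + (1 - t⁻¹) Σ_{i<j} E_{ij}` is `Id + (1 - t) Σ_{i<j} t^{i-j} E_{ij}`. -/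
theorem stmt_0 {K : Type*} [Field K] (n : ℕ) (t : K) (ht : t ≠ 0)
    (A B : Matrix (Fin n) (Fin n) K)
    (hA : A = Matrix.of fun i j : Fin n => if i = j then 1 else if i < j then 1 - t⁻¹ else 0)
    (hB : B = Matrix.of fun i j : Fin n =>
      if i = j then 1 else if i < j then (1 - t) * t ^ ((i : ℤ) - (j : ℤ)) else 0) :
    A * B = 1 ∧ B * A = 1 := by
  have hAB : A * B = 1 := by
    by_cases ht1 : t = 1
    · subst ht1
      have hA1 : A = 1 := by
        subst hA; ext i j
        by_cases hij : i = j <;> simp [Matrix.one_apply, hij]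
      have hB1 : B = 1 := by
        subst hB; ext i j
        by_cases hij : i = j <;> simp [Matrix.one_apply, hij]
      rw [hA1, hB1, one_mul]
    · subst hA hB
      ext i k
      rw [Matrix.mul_apply]
      have hstep : ∑ j : Fin n,
          (Matrix.of fun i j : Fin n => if i = j then (1:K) else if i < j then 1 - t⁻¹ else 0) i j *
          (Matrix.of fun i j : Fin n =>
            if i = j then (1:K) else if i < j then (1 - t) * t ^ ((i : ℤ) - (j : ℤ)) else 0) j k =
          ∑ m ∈ Finset.range n,
            (if (i : ℕ) = m then (1 : K) else if (i : ℕ) < m then 1 - t⁻¹ else 0) *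
            (if m = (k : ℕ) then 1 else if m < (k : ℕ) then
              (1 - t) * t ^ ((m : ℤ) - ((k : ℕ) : ℤ)) else 0) := by
        rw [← Fin.sum_univ_eq_sum_range (fun m =>
            (if (i : ℕ) = m then (1 : K) else if (i : ℕ) < m then 1 - t⁻¹ else 0) *
            (if m = (k : ℕ) then 1 else if m < (k : ℕ) then
              (1 - t) * t ^ ((m : ℤ) - ((k : ℕ) : ℤ)) else 0)) n]
        refine Finset.sum_congr rfl fun j _ => ?_
        simp only [Matrix.of_apply, Fin.ext_iff, Fin.lt_def]
      rw [hstep, key_sum t ht ht1 n i k k.isLt]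
      simp [Matrix.one_apply, Fin.ext_iff]
  exact ⟨hAB, mul_eq_one_comm.mp hAB⟩
end

section
/- For any parameters a = (a_1,…,a_n) with all a_k nonzero, the diagonal matrix J(a) = Σ_{k=1}^n a_k e_{kk} satisfies the reflection equation R⁺₁₂ J₂ (R⁺₁₂)^{t₂} J₁ = J₁ (R⁺₁₂)^{t₂} J₂ R⁺₁₂ in End(V⊗V), where V = K^n. -/
open Matrix Kronecker

noncomputable section

/-- The ground field `K = ℚ(q)`. -/
abbrev K1 : Type := RatFunc ℚ

/-- The indeterminate `q`. -/
noncomputable def q1 : K1 := RatFunc.X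

/-- The quantum R-matrix
`R⁺ = Σ_{i,j} q^{δ_{ij}} e_{ii}⊗e_{jj} + (q - q⁻¹) Σ_{i<j} e_{ij}⊗e_{ji}`
viewed as a matrix on `V ⊗ V`, `V = K^n`. -/
noncomputable def Rplus (n : ℕ) : Matrix (Fin n × Fin n) (Fin n × Fin n) K1 := fun p r =>
  (if p = r then (if p.1 = p.2 then q1 else 1) else 0) +
    (if p.1 < p.2 ∧ r.1 = p.2 ∧ r.2 = p.1 then q1 - q1⁻¹ else 0)

/-- Transposition in the second tensor factor. -/
noncomputable def t2 {n : ℕ} (M : Matrix (Fin n × Fin n) (Fin n × Fin n) K1) :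
    Matrix (Fin n × Fin n) (Fin n × Fin n) K1 := fun p r => M (p.1, r.2) (r.1, p.2)

variable {n : ℕ}

lemma kron2 (a : Fin n → K1) : (1 : Matrix (Fin n) (Fin n) K1) ⊗ₖ Matrix.diagonal a
    = Matrix.diagonal (fun p : Fin n × Fin n => a p.2) := by
  rw [← Matrix.diagonal_one, Matrix.diagonal_kronecker_diagonal]
  simp

lemma kron1 (a : Fin n → K1) : Matrix.diagonal a ⊗ₖ (1 : Matrix (Fin n) (Fin n) K1)
    = Matrix.diagonal (fun p : Fin n × Fin n => a p.1) := by
  rw [← Matrix.diagonal_one, Matrix.diagonal_kronecker_diagonal]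
  simp

lemma t2R_apply (p r : Fin n × Fin n) : t2 (Rplus n) p r =
    (if r = p then (if p.1 = p.2 then q1 else 1) else 0) +
      (if p.1 = p.2 ∧ r.1 = r.2 ∧ p.1 < r.1 then q1 - q1⁻¹ else 0) := by
  rcases p with ⟨i, j⟩; rcases r with ⟨k, l⟩
  simp only [t2, Rplus, Prod.mk.injEq, Prod.ext_iff]
  congr 1
  · split_ifs <;> simp_all [Fin.ext_iff] <;> omega
  · split_ifs <;> simp_all [Fin.ext_iff] <;> omega

lemma Rplus_apply (p r : Fin n × Fin n) : Rplus n p r =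
    (if r = p then (if p.1 = p.2 then q1 else 1) else 0) +
      (if p.1 < p.2 ∧ r = (p.2, p.1) then q1 - q1⁻¹ else 0) := by
  rcases p with ⟨i, j⟩; rcases r with ⟨k, l⟩
  simp only [Rplus, Prod.mk.injEq, Prod.ext_iff]
  congr 1
  all_goals (split_ifs <;> simp_all [Fin.ext_iff] <;> omega)




lemma sum_guard (P : Prop) [Decidable P] (w : Fin n × Fin n) (X : K1) :
    ∑ r : Fin n × Fin n, (if P ∧ r = w then X else 0) = if P then X else 0 := by
  by_cases hp : P <;> simp [hp]

lemma keyL (a : Fin n → K1) (p s r : Fin n × Fin n) :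
    Rplus n p r * a r.2 * t2 (Rplus n) r s =
      (if r = p then (if p.1 = p.2 then q1 else 1) * a p.2 * t2 (Rplus n) p s else 0) +
        (if p.1 < p.2 ∧ r = (p.2, p.1) then
          (q1 - q1⁻¹) * a p.1 * t2 (Rplus n) (p.2, p.1) s else 0) := by
  rw [Rplus_apply]
  rcases p with ⟨i, j⟩
  rcases r with ⟨x, y⟩
  simp only [Prod.mk.injEq]
  split_ifs
  all_goals try casesm* _ ∧ _
  all_goals subst_vars
  all_goals (first | rfl | ring1 | (exfalso; omega) | (simp_all; try ring1))

lemma keyR (a : Fin n → K1) (p s r : Fin n × Fin n) :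
    t2 (Rplus n) p r * a r.2 * Rplus n r s =
      (if r = p then (if p.1 = p.2 then q1 else 1) * a p.2 * Rplus n p s else 0) +
        (if (p.1 = p.2 ∧ p.1 < r.1) ∧ r.1 = r.2 then
          (q1 - q1⁻¹) * a r.2 * Rplus n r s else 0) := by
  rw [t2R_apply p r]
  rcases p with ⟨i, j⟩
  rcases r with ⟨x, y⟩
  simp only [Prod.mk.injEq]
  split_ifs
  all_goals try casesm* _ ∧ _
  all_goals subst_vars
  all_goals (first | rfl | ring1 | (exfalso; omega) | (simp_all; try ring1))

set_option maxHeartbeats 1000000 in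
lemma sumL (a : Fin n → K1) (p s : Fin n × Fin n) :
    ∑ r : Fin n × Fin n, Rplus n p r * a r.2 * t2 (Rplus n) r s =
      (if p = s then (if p.1 = p.2 then q1 * q1 else 1) * a p.2 else 0) +
        (if p.1 = p.2 ∧ s.1 = s.2 ∧ p.1 < s.1 then q1 * (q1 - q1⁻¹) * a p.1 else 0) +
        (if p.1 < p.2 ∧ s = (p.2, p.1) then (q1 - q1⁻¹) * a p.1 else 0) := by
  rw [Finset.sum_congr rfl fun r _ => keyL a p s r, Finset.sum_add_distrib, sum_guard,
    Finset.sum_ite_eq' Finset.univ p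
      (fun _ => (if p.1 = p.2 then q1 else 1) * a p.2 * t2 (Rplus n) p s)]
  rw [t2R_apply, t2R_apply]
  simp only [Finset.mem_univ, if_true]
  rcases p with ⟨i, j⟩
  rcases s with ⟨k, l⟩
  simp only [Prod.mk.injEq]
  split_ifs
  all_goals try casesm* _ ∧ _
  all_goals subst_vars
  all_goals (first | rfl | ring1 | (exfalso; omega) | (simp_all; try ring1))

lemma keyR2 (a : Fin n → K1) (p s r : Fin n × Fin n) :
    t2 (Rplus n) p r * a r.2 * Rplus n r s =
      (if r = p then (if p.1 = p.2 then q1 else 1) * a p.2 * Rplus n p s else 0) +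
        (if (p.1 = p.2 ∧ s.1 = s.2 ∧ p.1 < s.1) ∧ r = s then
          (q1 - q1⁻¹) * a s.2 * q1 else 0) := by
  rw [t2R_apply p r, Rplus_apply]
  rcases p with ⟨i, j⟩
  rcases r with ⟨x, y⟩
  rcases s with ⟨k, l⟩
  simp only [Prod.mk.injEq]
  split_ifs
  all_goals try casesm* _ ∧ _
  all_goals subst_vars
  all_goals (first | rfl | ring1 | (exfalso; omega) | (simp_all [Rplus_apply, Prod.mk.injEq]; try ring1))
  all_goals try split_ifs
  all_goals try casesm* _ ∧ _
  all_goals subst_vars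
  all_goals (first | rfl | ring1 | (exfalso; omega) | (simp_all; try ring1))

set_option maxHeartbeats 1000000 in
lemma sumR (a : Fin n → K1) (p s : Fin n × Fin n) :
    ∑ r : Fin n × Fin n, t2 (Rplus n) p r * a r.2 * Rplus n r s =
      (if p = s then (if p.1 = p.2 then q1 * q1 else 1) * a p.2 else 0) +
        (if p.1 = p.2 ∧ s.1 = s.2 ∧ p.1 < s.1 then q1 * (q1 - q1⁻¹) * a s.1 else 0) +
        (if p.1 < p.2 ∧ s = (p.2, p.1) then (q1 - q1⁻¹) * a p.2 else 0) := by
  rw [Finset.sum_congr rfl fun r _ => keyR2 a p s r, Finset.sum_add_distrib, sum_guard,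
    Finset.sum_ite_eq' Finset.univ p
      (fun _ => (if p.1 = p.2 then q1 else 1) * a p.2 * Rplus n p s)]
  rw [Rplus_apply]
  simp only [Finset.mem_univ, if_true]
  rcases p with ⟨i, j⟩
  rcases s with ⟨k, l⟩
  simp only [Prod.mk.injEq]
  split_ifs
  all_goals try casesm* _ ∧ _
  all_goals subst_vars
  all_goals (first | rfl | ring1 | (exfalso; omega) | (simp_all; try ring1))


/-- the diagonal matrix `J(a) = Σ_k a_k e_{kk}` satisfies the reflection equation
`R⁺₁₂ J₂ (R⁺₁₂)^{t₂} J₁ = J₁ (R⁺₁₂)^{t₂} J₂ R⁺₁₂`. -/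
theorem stmt_1 (n : ℕ) (a : Fin n → K1) (ha : ∀ k, a k ≠ 0) :
    Rplus n * ((1 : Matrix (Fin n) (Fin n) K1) ⊗ₖ Matrix.diagonal a) * t2 (Rplus n) *
        (Matrix.diagonal a ⊗ₖ (1 : Matrix (Fin n) (Fin n) K1)) =
      (Matrix.diagonal a ⊗ₖ (1 : Matrix (Fin n) (Fin n) K1)) * t2 (Rplus n) *
        ((1 : Matrix (Fin n) (Fin n) K1) ⊗ₖ Matrix.diagonal a) * Rplus n := by
  rw [kron1, kron2]
  ext p s
  rw [Matrix.mul_diagonal, Matrix.mul_apply]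
  conv_rhs => rw [Matrix.mul_apply]
  simp only [Matrix.mul_diagonal, Matrix.diagonal_mul]
  have hr : ∑ r : Fin n × Fin n, a p.1 * t2 (Rplus n) p r * a r.2 * Rplus n r s =
      a p.1 * ∑ r : Fin n × Fin n, t2 (Rplus n) p r * a r.2 * Rplus n r s := by
    rw [Finset.mul_sum]
    exact Finset.sum_congr rfl fun r _ => by ring
  rw [hr, sumL, sumR]
  rcases p with ⟨i, j⟩
  rcases s with ⟨k, l⟩
  simp only [Prod.mk.injEq]
  split_ifs
  all_goals try casesm* _ ∧ _
  all_goals subst_vars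
  all_goals (first | rfl | ring1 | (exfalso; omega) | (simp_all; try ring1))

end
end

section
/- Let ℓ be a nonnegative integer and a a nonzero scalar. The recurrence a·q^{-ℓ+2j+2}·[j+1]·c_{j+1} = [ℓ-j+1]·c_{j-1} for 0 ≤ j ≤ ℓ, with c_{-1} = c_{ℓ+1} = 0 and [m] = (q^m - q^{-m})/(q - q^{-1}), has no nonzero solution (c_0,…,c_ℓ) when ℓ is odd; when ℓ is even, the solution space is one-dimensional, given by c_{2k+1} = 0 and c_{2k} = (-1)^k a^{-k} q^{2k(ℓ-k)} ((q^{-2ℓ};q⁴)_k / (q⁴;q⁴)_k) c_0 for 0 ≤ k ≤ ℓ/2, where (x;q)_k = (1-x)(1-xq)⋯(1-xq^{k-1}). -/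
noncomputable section

/-- The quantum integer `[m] = (q^m - q^{-m})/(q - q⁻¹)`. -/
noncomputable def qint (m : ℤ) : K1 := (q1 ^ m - q1 ^ (-m)) / (q1 - q1⁻¹)

/-- `c : ℤ → K` is a solution of the recurrence
`a q^{-ℓ+2j+2} [j+1] c_{j+1} = [ℓ-j+1] c_{j-1}` for `0 ≤ j ≤ ℓ`,
with boundary conditions `c_{-1} = c_{ℓ+1} = 0`. -/
def Sol (ℓ : ℕ) (a : K1) (c : ℤ → K1) : Prop :=
  c (-1) = 0 ∧ c ((ℓ : ℤ) + 1) = 0 ∧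
    ∀ j : ℕ, j ≤ ℓ →
      a * q1 ^ (-(ℓ : ℤ) + 2 * j + 2) * qint ((j : ℤ) + 1) * c ((j : ℤ) + 1) =
        qint ((ℓ : ℤ) - j + 1) * c ((j : ℤ) - 1)

/-!
The recurrence links `c_{j-1}` and `c_{j+1}`, so it splits into the chain of odd and the chain
of even indices, and its coefficients `a`, `[j+1]`, `[ℓ-j+1]` never vanish for `0 ≤ j ≤ ℓ`
because `q` is not a root of unity. Running the odd chain upwards from `c_{-1} = 0` kills every
odd coefficient; when `ℓ` is odd, running the even chain downwards from `c_{ℓ+1} = 0` kills the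
rest. When `ℓ` is even, the boundary condition `c_{ℓ+1} = 0` sits on the odd chain, so the even
chain is free: it is determined by `c_0`, and its ratio `c_{2k+2}/c_{2k}` is the quotient of
quantum integers `[ℓ-2k]/[2k+2]`, which unwinds to the `q⁴`-Pochhammer ratio.
-/

open RatFunc in
lemma intDegree_q1_zpow (n : ℤ) : (q1 ^ n).intDegree = n := by
  have hq : q1 ≠ 0 := X_ne_zero
  induction n using Int.induction_on with
  | zero => simp
  | succ n ih =>
    rw [zpow_add_one₀ hq, intDegree_mul (zpow_ne_zero _ hq) hq, ih, q1, intDegree_X]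
  | pred n ih =>
    rw [zpow_sub_one₀ hq, intDegree_mul (zpow_ne_zero _ hq) (inv_ne_zero hq), ih,
      intDegree_inv, q1, intDegree_X, sub_eq_add_neg]

lemma q1_zpow_injective : Function.Injective (q1 ^ · : ℤ → K1) := fun m n h => by
  simpa only [intDegree_q1_zpow] using congrArg RatFunc.intDegree h

lemma q1_zpow_sub_zpow_neg_ne_zero {m : ℤ} (hm : m ≠ 0) : q1 ^ m - q1 ^ (-m) ≠ 0 :=
  fun h => hm (by have := q1_zpow_injective (sub_eq_zero.mp h); omega)

lemma q1_sub_inv_ne_zero : q1 - q1⁻¹ ≠ 0 := by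
  simpa using q1_zpow_sub_zpow_neg_ne_zero one_ne_zero

lemma qint_ne_zero {m : ℤ} (hm : m ≠ 0) : qint m ≠ 0 :=
  div_ne_zero (q1_zpow_sub_zpow_neg_ne_zero hm) q1_sub_inv_ne_zero

def evenCoeff (ℓ : ℕ) (a : K1) (k : ℕ) : K1 :=
  (-1) ^ k * (a⁻¹) ^ k * q1 ^ (2 * (k : ℤ) * ((ℓ : ℤ) - (k : ℤ))) *
    ((∏ i ∈ Finset.range k, (1 - q1 ^ (-2 * (ℓ : ℤ)) * q1 ^ (4 * (i : ℤ)))) /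
      (∏ i ∈ Finset.range k, (1 - q1 ^ (4 : ℤ) * q1 ^ (4 * (i : ℤ)))))

lemma evenCoeff_zero (ℓ : ℕ) (a : K1) : evenCoeff ℓ a 0 = 1 := by
  simp [evenCoeff]

lemma evenCoeff_succ (ℓ : ℕ) (a : K1) (k : ℕ) :
    evenCoeff ℓ a (k + 1) =
      -a⁻¹ * q1 ^ (2 * (ℓ : ℤ) - 4 * k - 2) * (1 - q1 ^ (-2 * (ℓ : ℤ)) * q1 ^ (4 * (k : ℤ))) /
        (1 - q1 ^ (4 : ℤ) * q1 ^ (4 * (k : ℤ))) * evenCoeff ℓ a k := by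
  have hpow : q1 ^ (2 * ((k + 1 : ℕ) : ℤ) * ((ℓ : ℤ) - (k + 1 : ℕ))) =
      q1 ^ (2 * (ℓ : ℤ) - 4 * k - 2) * q1 ^ (2 * (k : ℤ) * ((ℓ : ℤ) - k)) := by
    rw [← zpow_add₀ RatFunc.X_ne_zero]; push_cast; ring_nf
  rw [evenCoeff, evenCoeff, hpow, Finset.prod_range_succ, Finset.prod_range_succ,
    mul_div_mul_comm]
  ring

lemma evenCoeff_step (ℓ : ℕ) {a : K1} (ha : a ≠ 0) (k : ℕ) :
    a * q1 ^ (-(ℓ : ℤ) + 2 * (2 * k + 1) + 2) * qint (2 * k + 1 + 1) * evenCoeff ℓ a (k + 1) =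
      qint (ℓ - (2 * k + 1) + 1) * evenCoeff ℓ a k := by
  have hq : q1 ≠ 0 := RatFunc.X_ne_zero
  have hT : 1 - q1 ^ (4 : ℤ) * q1 ^ (4 * (k : ℤ)) ≠ 0 := by
    rw [← zpow_add₀ hq, sub_ne_zero, ne_comm, ← zpow_zero q1]
    exact q1_zpow_injective.ne (by omega)
  -- `[2k+2]` and `[ℓ-2k]` carry exactly the factors `1 - q^{4k+4}` and `1 - q^{4k-2ℓ}`
  -- of the Pochhammer ratio.
  have hlow : qint (2 * k + 1 + 1) =
      -q1 ^ (-(2 * k + 2) : ℤ) * (1 - q1 ^ (4 : ℤ) * q1 ^ (4 * (k : ℤ))) / (q1 - q1⁻¹) := by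
    rw [qint]; congr 1; simp only [mul_sub, mul_one, neg_mul, ← zpow_add₀ hq]; ring_nf
  have hhigh : qint (ℓ - (2 * k + 1) + 1) =
      q1 ^ ((ℓ : ℤ) - 2 * k) * (1 - q1 ^ (-2 * (ℓ : ℤ)) * q1 ^ (4 * (k : ℤ))) / (q1 - q1⁻¹) := by
    rw [qint]; congr 1; simp only [mul_sub, mul_one, ← zpow_add₀ hq]; ring_nf
  have hexp : q1 ^ (-(ℓ : ℤ) + 2 * (2 * k + 1) + 2) * q1 ^ (-(2 * k + 2) : ℤ) *
      q1 ^ (2 * (ℓ : ℤ) - 4 * k - 2) = q1 ^ ((ℓ : ℤ) - 2 * k) := by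
    simp only [← zpow_add₀ hq]; ring_nf
  rw [evenCoeff_succ, hlow, hhigh, ← hexp]
  generalize q1 ^ (4 : ℤ) * q1 ^ (4 * (k : ℤ)) = T at hT ⊢
  have := q1_sub_inv_ne_zero
  field_simp

namespace Sol

variable {ℓ : ℕ} {a : K1} {c : ℤ → K1}

lemma step (h : Sol ℓ a c) {j : ℤ} (hj₀ : 0 ≤ j) (hjℓ : j ≤ ℓ) :
    a * q1 ^ (-(ℓ : ℤ) + 2 * j + 2) * qint (j + 1) * c (j + 1) =
      qint (ℓ - j + 1) * c (j - 1) := by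
  lift j to ℕ using hj₀
  exact h.2.2 j (by exact_mod_cast hjℓ)

lemma stepCoeff_ne_zero (ha : a ≠ 0) {j : ℤ} (hj₀ : 0 ≤ j) :
    a * q1 ^ (-(ℓ : ℤ) + 2 * j + 2) * qint (j + 1) ≠ 0 :=
  mul_ne_zero (mul_ne_zero ha (zpow_ne_zero _ RatFunc.X_ne_zero)) (qint_ne_zero (by omega))

lemma eq_zero_of_eq_zero_sub_two (h : Sol ℓ a c) (ha : a ≠ 0) {j : ℤ} (hj₀ : 0 ≤ j)
    (hjℓ : j ≤ ℓ) (hc : c (j - 1) = 0) : c (j + 1) = 0 := by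
  simpa [hc, stepCoeff_ne_zero ha hj₀] using h.step hj₀ hjℓ

lemma eq_zero_of_eq_zero_add_two (h : Sol ℓ a c) {j : ℤ} (hj₀ : 0 ≤ j) (hjℓ : j ≤ ℓ)
    (hc : c (j + 1) = 0) : c (j - 1) = 0 := by
  simpa [hc, qint_ne_zero (show (ℓ : ℤ) - j + 1 ≠ 0 by omega)] using (h.step hj₀ hjℓ).symm

lemma two_mul_sub_one_eq_zero (h : Sol ℓ a c) (ha : a ≠ 0) (k : ℕ) (hk : 2 * k ≤ ℓ + 1) :
    c (2 * k - 1) = 0 := by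
  induction k with
  | zero => simpa using h.1
  | succ k ih =>
    have := h.eq_zero_of_eq_zero_sub_two ha (j := 2 * k) (by omega) (by omega) (ih (by omega))
    rwa [show (2 * k + 1 : ℤ) = 2 * (k + 1 : ℕ) - 1 by push_cast; ring] at this

lemma add_one_sub_two_mul_eq_zero (h : Sol ℓ a c) (k : ℕ) (hk : 2 * k ≤ ℓ + 1) :
    c (ℓ + 1 - 2 * k) = 0 := by
  induction k with
  | zero => simpa using h.2.1
  | succ k ih =>
    have := h.eq_zero_of_eq_zero_add_two (j := ℓ - 2 * k) (by omega) (by omega)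
      (by rw [← ih (by omega)]; ring_nf)
    rwa [show (ℓ - 2 * k - 1 : ℤ) = ℓ + 1 - 2 * (k + 1 : ℕ) by push_cast; ring] at this

lemma eq_zero_of_odd (h : Sol ℓ a c) (ha : a ≠ 0) (hℓ : Odd ℓ) {j : ℕ} (hj : j ≤ ℓ) :
    c j = 0 := by
  obtain ⟨s, hs⟩ := hℓ
  rcases Nat.even_or_odd j with ⟨m, hm⟩ | ⟨m, hm⟩
  · have := h.add_one_sub_two_mul_eq_zero (s + 1 - m) (by omega)
    rwa [show (ℓ + 1 - 2 * (s + 1 - m : ℕ) : ℤ) = j by omega] at this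
  · have := h.two_mul_sub_one_eq_zero ha (m + 1) (by omega)
    rwa [show (2 * (m + 1 : ℕ) - 1 : ℤ) = j by omega] at this

lemma two_mul_eq (h : Sol ℓ a c) (ha : a ≠ 0) (k : ℕ) (hk : 2 * k ≤ ℓ) :
    c (2 * k) = evenCoeff ℓ a k * c 0 := by
  induction k with
  | zero => simp [evenCoeff_zero]
  | succ k ih =>
    have hrec := h.step (j := 2 * k + 1) (by omega) (by omega)
    rw [add_sub_cancel_right, ih (by omega)] at hrec
    push_cast
    rw [show 2 * ((k : ℤ) + 1) = 2 * k + 1 + 1 by ring]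
    apply mul_left_cancel₀ (stepCoeff_ne_zero ha (j := 2 * k + 1) (by omega))
    linear_combination hrec - c 0 * evenCoeff_step ℓ ha k

end Sol

def evenSol (ℓ : ℕ) (a : K1) (n : ℤ) : K1 :=
  if 0 ≤ n ∧ n ≤ ℓ ∧ n % 2 = 0 then evenCoeff ℓ a (n / 2).toNat else 0

lemma sol_evenSol {ℓ : ℕ} (hℓ : Even ℓ) {a : K1} (ha : a ≠ 0) : Sol ℓ a (evenSol ℓ a) := by
  obtain ⟨t, ht⟩ := hℓ
  refine ⟨if_neg (by omega), if_neg (by omega), fun j hj => ?_⟩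
  rcases Nat.even_or_odd j with ⟨m, hm⟩ | ⟨m, hm⟩
  · rw [evenSol, evenSol, if_neg (by omega), if_neg (by omega), mul_zero, mul_zero]
  · have hup : evenSol ℓ a (j + 1) = evenCoeff ℓ a (m + 1) := by
      rw [evenSol, if_pos (by omega)]; congr 1; omega
    have hdown : evenSol ℓ a (j - 1) = evenCoeff ℓ a m := by
      rw [evenSol, if_pos (by omega)]; congr 1; omega
    rw [hup, hdown, show (j : ℤ) = 2 * m + 1 by omega]
    exact evenCoeff_step ℓ ha m

lemma evenSol_zero (ℓ : ℕ) (a : K1) : evenSol ℓ a 0 = 1 := by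
  simp [evenSol, evenCoeff_zero]

/-- the recurrence has no nonzero solution when `ℓ` is odd; when `ℓ` is even
the solution space is one-dimensional, given by `c_{2k+1} = 0` and
`c_{2k} = (-1)^k a^{-k} q^{2k(ℓ-k)} ((q^{-2ℓ};q⁴)_k/(q⁴;q⁴)_k) c_0`. -/
theorem stmt_4 (ℓ : ℕ) (a : K1) (ha : a ≠ 0) :
    (Odd ℓ → ∀ c : ℤ → K1, Sol ℓ a c → ∀ j : ℕ, j ≤ ℓ → c j = 0) ∧
      (Even ℓ →
        (∀ c : ℤ → K1, Sol ℓ a c →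
          (∀ k : ℕ, 2 * k + 1 ≤ ℓ → c (2 * (k : ℤ) + 1) = 0) ∧
          (∀ k : ℕ, 2 * k ≤ ℓ →
            c (2 * (k : ℤ)) =
              (-1) ^ k * (a⁻¹) ^ k * q1 ^ (2 * (k : ℤ) * ((ℓ : ℤ) - (k : ℤ))) *
                ((∏ i ∈ Finset.range k, (1 - q1 ^ (-2 * (ℓ : ℤ)) * q1 ^ (4 * (i : ℤ)))) /
                  (∏ i ∈ Finset.range k, (1 - q1 ^ (4 : ℤ) * q1 ^ (4 * (i : ℤ))))) * c 0)) ∧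
        ∃ c : ℤ → K1, Sol ℓ a c ∧ c 0 = 1) := by
  refine ⟨fun hℓ c hc j hj => hc.eq_zero_of_odd ha hℓ hj, fun hℓ => ⟨fun c hc => ⟨?_, ?_⟩,
    evenSol ℓ a, sol_evenSol hℓ ha, evenSol_zero ℓ a⟩⟩
  · intro k hk
    have := hc.two_mul_sub_one_eq_zero ha (k + 1) (by omega)
    rwa [show (2 * (k + 1 : ℕ) - 1 : ℤ) = 2 * k + 1 by push_cast; ring] at this
  · exact hc.two_mul_eq ha

end
end

section
/- In the q-exterior algebra Λ_q(V) on generators v_1,…,v_{2n} with relations v_k∧v_k = 0 and q v_i∧v_j + v_j∧v_i = 0 for i<j, the element w₁ = Σ_{k=1}^n a_k v_{2k-1}∧v_{2k} satisfies the q-binomial power formula w₁^{∧r} = [r]_{q⁴}! · Σ_{1≤k₁<⋯<k_r≤n} a_{k₁}⋯a_{k_r} v_{2k₁-1}∧v_{2k₁}∧⋯∧v_{2k_r-1}∧v_{2k_r}, where [r]_{q⁴}! = (q⁴;q⁴)_r/(1-q⁴)^r. -/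
/-! The elements `E k = v_{2k-1} ∧ v_{2k}` square to zero and `q⁴`-commute: `E j E i = q⁴ E i E j`
for `i < j`, since moving one pair past another costs four transpositions of generators, each a
factor `-q`. For any such `Q`-skew family, multiplying `∑ a_k E_k` into the sum of increasing
products `E_s` over `r`-subsets `s` produces every `(r+1)`-subset `t` once from each `k ∈ t`, with
the factor `Q ^ #{x ∈ t | x < k}` paid to move `E k` into place; these factors add up to
`1 + Q + ⋯ + Q^r`, and induction on `r` gives `[r]_Q!`. -/

set_option synthInstance.maxHeartbeats 1000000
set_option maxHeartbeats 1000000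

open scoped Classical

noncomputable section

/-- The canonical basis vector `v_k` of `V = K^N`. -/
noncomputable def eV (N : ℕ) (k : Fin N) : Fin N → K1 := Pi.single k 1

/-- The defining relations of the q-exterior algebra:
`v_k ∧ v_k = 0` and `q v_i ∧ v_j + v_j ∧ v_i = 0` for `i < j`. -/
inductive qExtRel (N : ℕ) :
    TensorAlgebra K1 (Fin N → K1) → TensorAlgebra K1 (Fin N → K1) → Prop
  | sq (k : Fin N) :
      qExtRel N (TensorAlgebra.ι K1 (eV N k) * TensorAlgebra.ι K1 (eV N k)) 0
  | anti (i j : Fin N) (h : i < j) :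
      qExtRel N (q1 • (TensorAlgebra.ι K1 (eV N i) * TensorAlgebra.ι K1 (eV N j)) +
        TensorAlgebra.ι K1 (eV N j) * TensorAlgebra.ι K1 (eV N i)) 0

/-- The q-exterior algebra `Λ_q(V)`: quotient of the tensor algebra by the two-sided
ideal generated by the relations. -/
abbrev qExt (N : ℕ) := RingQuot (qExtRel N)

/-- The generator `v_k` of `Λ_q(V)`. -/
noncomputable def gen (N : ℕ) (k : Fin N) : qExt N :=
  RingQuot.mkAlgHom K1 (qExtRel N) (TensorAlgebra.ι K1 (eV N k))

open Finset

section QSkew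

variable {R A ι : Type*} [CommSemiring R] [Semiring A] [Algebra R A] [LinearOrder ι]

structure IsQSkew (Q : R) (E : ι → A) : Prop where
  mul_self : ∀ k, E k * E k = 0
  mul_comm_of_lt : ∀ ⦃i j⦄, i < j → E j * E i = Q • (E i * E j)

namespace IsQSkew

variable {Q : R} {E : ι → A}

theorem mul_mul_comm_of_lt (h : IsQSkew Q E) {i j : ι} (hij : i < j) (z : A) :
    E j * (E i * z) = Q • (E i * (E j * z)) := by
  rw [← mul_assoc, h.mul_comm_of_lt hij, smul_mul_assoc, mul_assoc]

theorem pair_mul_self (h : IsQSkew Q E) {x y : ι} (hxy : x < y) :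
    E x * E y * (E x * E y) = 0 := by
  rw [mul_assoc, h.mul_mul_comm_of_lt hxy, h.mul_self, mul_zero, smul_zero, mul_zero]

theorem pair_mul_pair (h : IsQSkew Q E) {x y z w : ι} (hxz : x < z) (hxw : x < w)
    (hyz : y < z) (hyw : y < w) :
    E z * E w * (E x * E y) = Q ^ 4 • (E x * E y * (E z * E w)) := by
  calc E z * E w * (E x * E y) = E z * (E w * (E x * E y)) := mul_assoc _ _ _
    _ = Q ^ 2 • (E z * (E x * (E y * E w))) := by
      rw [h.mul_mul_comm_of_lt hxw, h.mul_comm_of_lt hyw]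
      simp only [mul_smul_comm, smul_smul, sq]
    _ = Q ^ 4 • (E x * E y * (E z * E w)) := by
      rw [h.mul_mul_comm_of_lt hxz, h.mul_mul_comm_of_lt hyz]
      simp only [mul_smul_comm, smul_smul, mul_assoc]
      ring_nf

theorem adjacentPairs {n : ℕ} {E : Fin (2 * n) → A} (h : IsQSkew Q E) :
    IsQSkew (Q ^ 4) fun k : Fin n =>
      E ⟨2 * k.1, by omega⟩ * E ⟨2 * k.1 + 1, by omega⟩ where
  mul_self k := h.pair_mul_self (Fin.mk_lt_mk.2 (Nat.lt_succ_self _))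
  mul_comm_of_lt i j hij := by
    have : i.1 < j.1 := hij
    exact h.pair_mul_pair (Fin.mk_lt_mk.2 (by omega)) (Fin.mk_lt_mk.2 (by omega))
      (Fin.mk_lt_mk.2 (by omega)) (Fin.mk_lt_mk.2 (by omega))

end IsQSkew

end QSkew

theorem isQSkew_gen (N : ℕ) : IsQSkew (-q1) (gen N) where
  mul_self k := by
    simpa [gen] using RingQuot.mkAlgHom_rel K1 (qExtRel.sq k)
  mul_comm_of_lt i j hij := by
    have := RingQuot.mkAlgHom_rel K1 (qExtRel.anti i j hij)
    simp only [map_add, map_smul, map_mul, map_zero] at this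
    exact (eq_neg_of_add_eq_zero_left ((add_comm _ _).trans this)).trans
      (neg_smul q1 (gen N i * gen N j)).symm

section OrderedProd

variable {R A ι : Type*} [CommSemiring R] [Semiring A] [Algebra R A] [LinearOrder ι]

def orderedProd {M : Type*} [Monoid M] (E : ι → M) (s : Finset ι) : M := (s.sort.map E).prod

theorem orderedProd_insert_of_forall_lt {M : Type*} [Monoid M] (E : ι → M) {s : Finset ι} {x : ι}
    (hx : ∀ y ∈ s, x < y) :
    orderedProd E (insert x s) = E x * orderedProd E s := by
  rw [orderedProd, sort_insert _ (fun y hy => (hx y hy).le) fun hxs => lt_irrefl x (hx x hxs)]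
  rfl

theorem IsQSkew.mul_orderedProd {Q : R} {E : ι → A} (h : IsQSkew Q E) (s : Finset ι) (k : ι) :
    E k * orderedProd E s =
      if k ∈ s then 0 else Q ^ #{x ∈ s | x < k} • orderedProd E (insert k s) := by
  induction s using Finset.induction_on_min with
  | empty => simp [orderedProd]
  | insert x s hx ih =>
    have hxs : x ∉ s := fun hxs => lt_irrefl x (hx x hxs)
    rw [orderedProd_insert_of_forall_lt E hx]
    rcases lt_trichotomy k x with hkx | rfl | hxk
    · have hks : ∀ y ∈ insert x s, k < y := by
        simpa [hkx] using fun y hy => hkx.trans (hx y hy)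
      rw [if_neg fun hk => lt_irrefl k (hks k hk), filter_false_of_mem fun y hy =>
        (hks y hy).not_gt, card_empty, pow_zero, one_smul,
        orderedProd_insert_of_forall_lt E hks, orderedProd_insert_of_forall_lt E hx]
    · rw [if_pos (mem_insert_self k s), ← mul_assoc, h.mul_self, zero_mul]
    · rw [← mul_assoc, h.mul_comm_of_lt hxk, smul_mul_assoc, mul_assoc, ih]
      by_cases hks : k ∈ s
      · simp [hks]
      · have hkx : k ≠ x := hxk.ne'
        have hxks : ∀ y ∈ insert k s, x < y := by simpa [hxk] using hx
        rw [if_neg hks, if_neg (by simp [hkx, hks]), insert_comm k x,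
          orderedProd_insert_of_forall_lt E hxks, filter_insert, if_pos hxk,
          card_insert_of_notMem (by simp [hxs]), mul_smul_comm, smul_smul, pow_succ']

end OrderedProd

theorem Finset.sum_card_filter_lt {ι M : Type*} [LinearOrder ι] [AddCommMonoid M]
    (f : ℕ → M) (t : Finset ι) :
    ∑ k ∈ t, f #{x ∈ t | x < k} = ∑ p ∈ range #t, f p := by
  induction t using Finset.induction_on_max with
  | empty => simp
  | insert m t hm ih =>
    have hmt : m ∉ t := fun h => lt_irrefl m (hm m h)
    have hfilter : ∀ k ∈ t, {x ∈ insert m t | x < k} = {x ∈ t | x < k} := fun k hk => by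
      rw [filter_insert, if_neg (hm k hk).not_gt]
    rw [sum_insert hmt, sum_congr rfl fun k hk => by rw [hfilter k hk], ih,
      filter_insert, if_neg (lt_irrefl m), filter_true_of_mem hm, card_insert_of_notMem hmt,
      sum_range_succ, add_comm]

theorem Finset.sum_powersetCard_sum_compl {ι M : Type*} [Fintype ι] [DecidableEq ι]
    [AddCommMonoid M] (r : ℕ) (F : ι → Finset ι → M) :
    ∑ s ∈ powersetCard r univ, ∑ k ∈ sᶜ, F k s =
      ∑ t ∈ powersetCard (r + 1) univ, ∑ k ∈ t, F k (t.erase k) := by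
  rw [sum_sigma', sum_sigma']
  refine sum_nbij' (fun p => ⟨insert p.2 p.1, p.2⟩) (fun p => ⟨p.1.erase p.2, p.2⟩)
    ?_ ?_ ?_ ?_ ?_
  · rintro ⟨s, k⟩ hp
    simp only [mem_sigma, mem_powersetCard_univ, mem_compl] at hp ⊢
    exact ⟨by rw [card_insert_of_notMem hp.2, hp.1], mem_insert_self k s⟩
  · rintro ⟨t, k⟩ hp
    simp only [mem_sigma, mem_powersetCard_univ, mem_compl] at hp ⊢
    exact ⟨by rw [card_erase_of_mem hp.2, hp.1, Nat.add_sub_cancel], notMem_erase k t⟩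
  all_goals
    rintro ⟨_, k⟩ hp
    simp_all

def qFactorial {R : Type*} [CommSemiring R] (Q : R) (r : ℕ) : R :=
  ∏ i ∈ range r, ∑ p ∈ range (i + 1), Q ^ p

theorem qFactorial_eq_prod_div {F : Type*} [Field F] {Q : F} (hQ : Q ≠ 1) (r : ℕ) :
    qFactorial Q r = (∏ i ∈ range r, (1 - Q * Q ^ i)) / (1 - Q) ^ r := by
  have hpow : (1 - Q) ^ r = ∏ _i ∈ range r, (1 - Q) := by rw [prod_const, card_range]
  rw [qFactorial, hpow, ← prod_div_distrib]
  refine prod_congr rfl fun i _ => ?_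
  rw [geom_sum_eq hQ, ← pow_succ', ← neg_div_neg_eq, neg_sub, neg_sub]

section Power

variable {R A ι : Type*} [CommSemiring R] [Semiring A] [Algebra R A] [LinearOrder ι] [Fintype ι]
  {Q : R} {E : ι → A}

theorem IsQSkew.sum_smul_mul_sum_powersetCard (h : IsQSkew Q E) (a : ι → R) (r : ℕ) :
    (∑ k, a k • E k) * ∑ s ∈ powersetCard r univ, (∏ k ∈ s, a k) • orderedProd E s =
      (∑ p ∈ range (r + 1), Q ^ p) •
        ∑ t ∈ powersetCard (r + 1) univ, (∏ k ∈ t, a k) • orderedProd E t := by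
  set F : ι → Finset ι → A := fun k s =>
    Q ^ #{x ∈ insert k s | x < k} • (∏ x ∈ insert k s, a x) • orderedProd E (insert k s)
  have hterm (s : Finset ι) (k : ι) :
      (a k • E k) * ((∏ x ∈ s, a x) • orderedProd E s) = if k ∈ sᶜ then F k s else 0 := by
    rw [smul_mul_smul_comm, h.mul_orderedProd]
    by_cases hks : k ∈ s
    · simp [hks]
    · rw [if_neg hks, if_pos (mem_compl.2 hks), smul_comm]
      simp only [F, filter_insert, if_neg (lt_irrefl k), prod_insert hks]
  have hF (t : Finset ι) (k : ι) (hk : k ∈ t) :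
      F k (t.erase k) = Q ^ #{x ∈ t | x < k} • (∏ x ∈ t, a x) • orderedProd E t := by
    simp only [F, insert_erase hk]
  rw [sum_mul_sum, sum_comm]
  simp only [hterm, sum_ite_mem, univ_inter]
  rw [sum_powersetCard_sum_compl, smul_sum]
  refine sum_congr rfl fun t ht => ?_
  rw [sum_congr rfl (hF t), ← sum_smul, sum_card_filter_lt (Q ^ ·), mem_powersetCard_univ.1 ht]

theorem IsQSkew.sum_smul_pow (h : IsQSkew Q E) (a : ι → R) (r : ℕ) :
    (∑ k, a k • E k) ^ r =
      qFactorial Q r • ∑ s ∈ powersetCard r univ, (∏ k ∈ s, a k) • orderedProd E s := by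
  induction r with
  | zero => simp [qFactorial, orderedProd]
  | succ r ih =>
    rw [pow_succ', ih, mul_smul_comm, h.sum_smul_mul_sum_powersetCard, smul_smul, qFactorial,
      qFactorial, prod_range_succ]

end Power

section StrictMono

variable {ι : Type*} [LinearOrder ι] {r : ℕ}

theorem card_image_univ_of_strictMono {f : Fin r → ι} (hf : StrictMono f) :
    #(image f univ) = r := by
  rw [card_image_of_injective _ hf.injective, card_univ, Fintype.card_fin]

theorem orderedProd_image_univ_of_strictMono {M : Type*} [Monoid M] (E : ι → M)
    {f : Fin r → ι} (hf : StrictMono f) :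
    orderedProd E (image f univ) = (List.ofFn fun i => E (f i)).prod := by
  have hsort : (image f univ).sort = List.ofFn f := by
    refine (sortedLT_sort _).eq_of_mem_iff hf.sortedLT_ofFn fun x => ?_
    simp [List.mem_ofFn]
  rw [orderedProd, hsort, List.map_ofFn]
  rfl

theorem Finset.sum_ite_strictMono_eq_sum_powersetCard [Fintype ι] {M : Type*} [AddCommMonoid M]
    (F : Finset ι → M) :
    ∑ f : Fin r → ι, (if StrictMono f then F (image f univ) else 0) =
      ∑ s ∈ powersetCard r univ, F s := by
  rw [← sum_filter]
  refine sum_bij (fun f _ => image f univ) (fun f hf => ?_) (fun f hf g hg hfg => ?_)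
    (fun s hs => ?_) fun _ _ => rfl
  · exact mem_powersetCard_univ.2 (card_image_univ_of_strictMono (mem_filter.1 hf).2)
  · have hf' := (mem_filter.1 hf).2
    have hg' := (mem_filter.1 hg).2
    have hcard := card_image_univ_of_strictMono hg'
    exact (orderEmbOfFin_unique hcard (fun i => hfg ▸ mem_image_of_mem f (mem_univ i)) hf').trans
      (orderEmbOfFin_unique hcard (fun i => mem_image_of_mem g (mem_univ i)) hg').symm
  · have hcard := mem_powersetCard_univ.1 hs
    exact ⟨s.orderEmbOfFin hcard, mem_filter.2 ⟨mem_univ _, (s.orderEmbOfFin hcard).strictMono⟩,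
      image_orderEmbOfFin_univ s hcard⟩

end StrictMono

theorem q1_pow_four_ne_one : q1 ^ 4 ≠ 1 := by
  intro h
  have h2 : (Polynomial.X : Polynomial ℚ) ^ 4 = 1 := by
    apply RatFunc.algebraMap_injective ℚ
    rw [map_pow, map_one, RatFunc.algebraMap_X]
    exact h
  simpa using congrArg Polynomial.natDegree h2

/-- in `Λ_q(K^{2n})` the element `w₁ = Σ_k a_k v_{2k-1} ∧ v_{2k}` satisfies
`w₁^r = [r]_{q⁴}! Σ_{k₁<⋯<k_r} a_{k₁}⋯a_{k_r} v_{2k₁-1}∧v_{2k₁}∧⋯∧v_{2k_r-1}∧v_{2k_r}`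
where `[r]_{q⁴}! = (q⁴;q⁴)_r/(1-q⁴)^r`. -/
theorem stmt_5 (n r : ℕ) (a : Fin n → K1) :
    (∑ k : Fin n, a k •
        (gen (2 * n) ⟨2 * k.1, by have := k.2; omega⟩ *
          gen (2 * n) ⟨2 * k.1 + 1, by have := k.2; omega⟩)) ^ r =
      ((∏ i ∈ Finset.range r, (1 - q1 ^ 4 * (q1 ^ 4) ^ i)) / (1 - q1 ^ 4) ^ r) •
        ∑ f : Fin r → Fin n,
          if StrictMono f then (
            (∏ i : Fin r, a (f i)) •
              (List.ofFn fun i : Fin r =>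
                gen (2 * n) ⟨2 * (f i).1, by have := (f i).2; omega⟩ *
                  gen (2 * n) ⟨2 * (f i).1 + 1, by have := (f i).2; omega⟩).prod)
          else (0 : qExt (2 * n)) := by
  have hpairs := (isQSkew_gen (2 * n)).adjacentPairs
  rw [Even.neg_pow (by decide)] at hpairs
  rw [hpairs.sum_smul_pow, qFactorial_eq_prod_div q1_pow_four_ne_one,
    ← sum_ite_strictMono_eq_sum_powersetCard]
  refine congrArg _ (sum_congr rfl fun f _ => ?_)
  split_ifs with hf
  · rw [prod_image hf.injective.injOn, orderedProd_image_univ_of_strictMono _ hf]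
  · rfl

end
end

section
/- Define rational functions G⁺_{ij}(x;t) for 1 ≤ i ≤ j ≤ n by G⁺_{jj} = 1 and the recurrence (1 - x_i x_j^{-1}) G⁺_{ij} = (1 - t^{-1}) Σ_{i<k≤j} x_k x_j^{-1} G⁺_{kj} for i < j. Then G⁺_{ij}(x;t) = t^{i-j} (1-t) x_j Δ(x_i,…,x_{j-1},t x_j) / ((x_i - t x_j) Δ(x_i,…,x_j)), where Δ(y_1,…,y_m) = Π_{1≤a<b≤m} (y_b - y_a). -/
/-!
Subtracting the recurrence at `i + 1` from the one at `i` leaves the two-term recurrence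
`t (x_j - x_i) G_{ij} = (t x_j - x_{i+1}) G_{i+1,j}`, which telescopes to
`G_{ij} = t^{i-j} ∏_{i<m≤j} (t x_j - x_m) / ∏_{i≤m<j} (x_j - x_m)`. The stated form follows
by splitting `Δ(x_i,…,x_j) = Δ(x_i,…,x_{j-1}) ∏_{i≤m<j} (x_j - x_m)` and comparing the two ways
of peeling an end factor off `∏_{i≤m≤j} (t x_j - x_m)`.
-/

open Finset Order

section DifferenceProduct

variable {ι K : Type*} [LinearOrder ι] [CommRing K]

/-- `Δ` of the values of `x` on `s`, listed in increasing order. -/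
def differenceProduct (x : ι → K) (s : Finset ι) : K :=
  ∏ p ∈ (s ×ˢ s).filter (fun p => p.1 < p.2), (x p.2 - x p.1)

variable {x : ι → K} {s : Finset ι} {a : ι}

theorem differenceProduct_insert_of_forall_lt (ha : ∀ b ∈ s, b < a) :
    differenceProduct x (insert a s) = differenceProduct x s * ∏ b ∈ s, (x a - x b) := by
  have has : a ∉ s := fun h => lt_irrefl a (ha a h)
  simp only [differenceProduct, prod_filter, prod_product, prod_insert has, lt_irrefl, if_false,
    one_mul]
  rw [prod_eq_one fun c hc => if_neg (not_lt.2 (ha c hc).le), one_mul, ← prod_mul_distrib]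
  exact prod_congr rfl fun b hb => by rw [if_pos (ha b hb), mul_comm]

theorem differenceProduct_ne_zero [IsDomain K] (hx : Function.Injective x) :
    differenceProduct x s ≠ 0 :=
  prod_ne_zero_iff.2 fun _ hp => sub_ne_zero.2 fun h => (mem_filter.1 hp).2.ne (hx h).symm

end DifferenceProduct

section Recurrence

variable {ι K : Type*} [LinearOrder ι] [LocallyFiniteOrder ι] [Field K]
  {t : K} {x : ι → K} {G : ι → ι → K} {i j : ι}

theorem prod_Ioc_div_prod_Ico_eq (hx : Function.Injective x) (htx : x i ≠ t * x j)
    (hij : i ≤ j) :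
    (∏ m ∈ Ioc i j, (t * x j - x m)) / ∏ m ∈ Ico i j, (x j - x m) =
      (1 - t) * x j * (differenceProduct x (Ico i j) * ∏ m ∈ Ico i j, (t * x j - x m)) /
        ((x i - t * x j) * differenceProduct x (Icc i j)) := by
  have hIcc := (prod_Ico_mul_eq_prod_Icc (f := fun m => t * x j - x m) hij).trans
    (prod_Ioc_mul_eq_prod_Icc hij).symm
  have hΔ : differenceProduct x (Ico i j) ≠ 0 := differenceProduct_ne_zero hx
  have hD : ∏ m ∈ Ico i j, (x j - x m) ≠ 0 :=
    prod_ne_zero_iff.2 fun m hm => sub_ne_zero.2 (hx.ne (mem_Ico.1 hm).2.ne')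
  have hxt : x i - t * x j ≠ 0 := sub_ne_zero.2 htx
  rw [← Ico_insert_right hij,
    differenceProduct_insert_of_forall_lt fun b hb => (mem_Ico.1 hb).2]
  field_simp
  linear_combination hIcc

variable [SuccOrder ι]

theorem sub_mul_eq_sub_mul_succ_of_recurrence
    (hrec : ∀ i < j, (x j - x i) * G i j = (1 - t⁻¹) * ∑ k ∈ Ioc i j, x k * G k j)
    (hij : i < j) :
    (x j - x i) * G i j = (x j - t⁻¹ * x (succ i)) * G (succ i) j := by
  have htail : (1 - t⁻¹) * ∑ k ∈ Ioc (succ i) j, x k * G k j =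
      (x j - x (succ i)) * G (succ i) j := by
    rcases (succ_le_of_lt hij).lt_or_eq with h | h
    · exact (hrec _ h).symm
    · simp [h]
  rw [hrec i hij, ← insert_Ioc_succ_left_eq_Ioc hij, sum_insert (by simp)]
  linear_combination htail

theorem eq_prod_div_prod_of_recurrence [WellFoundedGT ι] (ht : t ≠ 0)
    (hx : Function.Injective x) (hdiag : G j j = 1)
    (hrec : ∀ i < j, (x j - x i) * G i j = (1 - t⁻¹) * ∑ k ∈ Ioc i j, x k * G k j)
    (hij : i ≤ j) :
    G i j =
      t⁻¹ ^ #(Ico i j) * (∏ m ∈ Ioc i j, (t * x j - x m)) / ∏ m ∈ Ico i j, (x j - x m) := by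
  induction i using WellFoundedGT.induction with
  | _ i ih =>
  rcases hij.lt_or_eq with hij | rfl
  · have hsucc : i < succ i := lt_succ_of_not_isMax (not_isMax_of_lt hij)
    have hxi : x j - x i ≠ 0 := sub_ne_zero.2 (hx.ne hij.ne')
    have hprod : ∏ m ∈ Ico (succ i) j, (x j - x m) ≠ 0 :=
      prod_ne_zero_iff.2 fun m hm => sub_ne_zero.2 (hx.ne (mem_Ico.1 hm).2.ne')
    have hi : i ∉ Ico (succ i) j := fun h => not_le.2 hsucc (mem_Ico.1 h).1
    have hstep := sub_mul_eq_sub_mul_succ_of_recurrence hrec hij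
    rw [ih _ hsucc (succ_le_of_lt hij)] at hstep
    rw [← insert_Ioc_succ_left_eq_Ioc hij, ← insert_Ico_succ_left_eq_Ico hij,
      prod_insert (by simp), prod_insert hi, card_insert_of_notMem hi, pow_succ]
    field_simp at hstep ⊢
    linear_combination hstep
  · simp [hdiag]

end Recurrence

/-- the solution of the recurrence
`(1 - x_i x_j⁻¹) G⁺_{ij} = (1 - t⁻¹) Σ_{i<k≤j} x_k x_j⁻¹ G⁺_{kj}`, `G⁺_{jj} = 1`,
is `G⁺_{ij} = t^{i-j} (1-t) x_j Δ(x_i,…,x_{j-1},t x_j) / ((x_i - t x_j) Δ(x_i,…,x_j))`. -/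
theorem stmt_6 {K : Type*} [Field K] (n : ℕ) (t : K) (x : Fin n → K)
    (ht : t ≠ 0) (hx0 : ∀ i, x i ≠ 0) (hinj : Function.Injective x)
    (htx : ∀ k i, t * x k ≠ x i)
    (G : Fin n → Fin n → K)
    (hdiag : ∀ j, G j j = 1)
    (hrec : ∀ i j : Fin n, i < j →
      (1 - x i * (x j)⁻¹) * G i j =
        (1 - t⁻¹) * ∑ k ∈ Finset.Ioc i j, x k * (x j)⁻¹ * G k j) :
    ∀ i j : Fin n, i ≤ j →
      G i j = t ^ ((i : ℤ) - (j : ℤ)) *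
        ((1 - t) * x j *
          ((∏ p ∈ (Finset.Ico i j ×ˢ Finset.Ico i j).filter fun p => p.1 < p.2,
              (x p.2 - x p.1)) * ∏ m ∈ Finset.Ico i j, (t * x j - x m))) /
        ((x i - t * x j) *
          ∏ p ∈ (Finset.Icc i j ×ˢ Finset.Icc i j).filter fun p => p.1 < p.2,
            (x p.2 - x p.1)) := by
  intro i j hij
  have hrec' : ∀ k < j, (x j - x k) * G k j = (1 - t⁻¹) * ∑ l ∈ Ioc k j, x l * G l j := by
    intro k hk
    have hxj := hx0 j
    have := hrec k j hk
    rw [sum_congr rfl fun l _ => mul_right_comm (x l) (x j)⁻¹ (G l j), ← sum_mul] at this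
    field_simp at this ⊢
    linear_combination this
  have hpow : t ^ ((i : ℤ) - (j : ℤ)) = t⁻¹ ^ #(Ico i j) := by
    rw [Fin.card_Ico, ← zpow_natCast, inv_zpow', Nat.cast_sub hij, neg_sub]
  rw [eq_prod_div_prod_of_recurrence ht hinj (hdiag j) hrec' hij, hpow, mul_div_assoc,
    mul_div_assoc]
  exact congrArg _ (prod_Ioc_div_prod_Ico_eq hinj (htx j i).symm hij)
end

section
/- With G⁺_{ij}(x;t) = t^{i-j} Π_{i<k≤j}(x_k - t x_j) / Π_{i≤k<j}(x_k - x_j) for 1 ≤ i ≤ j ≤ n, one has the column-sum identity Σ_{i≤k≤j} t^{j-k} G⁺_{kj}(x;t) = Δ(x_i,…,x_{j-1}, t x_j)/Δ(x_i,…,x_j) for all 1 ≤ i ≤ j ≤ n. -/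
/-!
Writing `r_m = (x_m - c)/(x_m - x_b)` and `P_k = ∏_{k ≤ m < b} r_m`, the `k`-th summand
`∏_{k<m≤b} (x_m - c) / ∏_{k≤m<b} (x_m - x_b)` equals `P_k - P_{k+1}` for `k < b` and `P_b = 1`
for `k = b`, so the sum telescopes to `P_a`. With `c = t x_b` this is the claimed quotient, since
the Vandermonde product over `a..b` splits off the factors `∏_{a≤m<b} (x_b - x_m)` of the last row.
-/

open Finset

namespace Nat

variable {K : Type*} [Field K] (y : ℕ → K) (c : K) {b : ℕ}

lemma prod_Ioc_div_prod_Ico_eq_sub {k : ℕ} (hk : k < b) (hyk : y k ≠ y b) :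
    (∏ m ∈ Ioc k b, (y m - c)) / ∏ m ∈ Ico k b, (y m - y b) =
      ∏ m ∈ Ico k b, (y m - c) / (y m - y b) - ∏ m ∈ Ico (k + 1) b, (y m - c) / (y m - y b) := by
  have hsub : y k - y b ≠ 0 := sub_ne_zero.2 hyk
  rw [← Ioo_insert_right hk, ← insert_Ico_add_one_left_eq_Ico hk, ← Ico_add_one_left_eq_Ioo,
    prod_insert (by simp), prod_insert (by simp), prod_insert (by simp), mul_div_mul_comm,
    ← prod_div_distrib]
  field_simp
  ring

theorem sum_prod_Ioc_div_prod_Ico {a : ℕ} (hab : a ≤ b) (hy : ∀ k ∈ Ico a b, y k ≠ y b) :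
    ∑ k ∈ Icc a b, (∏ m ∈ Ioc k b, (y m - c)) / ∏ m ∈ Ico k b, (y m - y b) =
      ∏ m ∈ Ico a b, (y m - c) / (y m - y b) := by
  rw [← sum_Ico_add_eq_sum_Icc hab, Ioc_self, Ico_self, prod_empty, prod_empty, div_one,
    sum_congr rfl fun k hk => prod_Ioc_div_prod_Ico_eq_sub y c (mem_Ico.1 hk).2 (hy k hk)]
  let P : ℕ → K := fun k => ∏ m ∈ Ico k b, (y m - c) / (y m - y b)
  have htelescope : ∑ k ∈ Ico a b, (P k - P (k + 1)) = P a - P b := by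
    rw [← neg_sub (P b), ← sum_Ico_sub P hab, ← sum_neg_distrib]
    simp only [neg_sub]
  change ∑ k ∈ Ico a b, (P k - P (k + 1)) + 1 = P a
  rw [htelescope, show P b = 1 by simp [P], sub_add_cancel]

end Nat

theorem Fin.sum_prod_Ioc_div_prod_Ico {K : Type*} [Field K] {n : ℕ} (x : Fin n → K) (c : K)
    {a b : Fin n} (hab : a ≤ b) (hx : ∀ k ∈ Ico a b, x k ≠ x b) :
    ∑ k ∈ Icc a b, (∏ m ∈ Ioc k b, (x m - c)) / ∏ m ∈ Ico k b, (x m - x b) =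
      ∏ m ∈ Ico a b, (x m - c) / (x m - x b) := by
  let y : ℕ → K := fun m => if h : m < n then x ⟨m, h⟩ else 0
  have hy : ∀ m : Fin n, y m = x m := fun m => dif_pos m.isLt
  have h := Nat.sum_prod_Ioc_div_prod_Ico y c (a := a) (b := b) hab (by
    rw [← Fin.map_valEmbedding_Ico, forall_mem_map]
    simpa only [Fin.valEmbedding_apply, hy] using hx)
  simpa only [← Fin.map_valEmbedding_Icc, ← Fin.map_valEmbedding_Ioc, ← Fin.map_valEmbedding_Ico,
    sum_map, prod_map, Fin.valEmbedding_apply, hy] using h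

lemma prod_filter_lt_Icc_product_Icc {ι M : Type*} [LinearOrder ι] [LocallyFiniteOrder ι]
    [CommMonoid M] (f : ι × ι → M) {a b : ι} (hab : a ≤ b) :
    ∏ p ∈ (Icc a b ×ˢ Icc a b).filter (fun p => p.1 < p.2), f p =
      (∏ p ∈ (Ico a b ×ˢ Ico a b).filter (fun p => p.1 < p.2), f p) * ∏ m ∈ Ico a b, f (m, b) := by
  have hb : b ∉ Ico a b := right_notMem_Ico
  have hlast : ∏ j ∈ insert b (Ico a b), (if b < j then f (b, j) else 1) = 1 :=
    prod_eq_one fun j hj => if_neg <| not_lt.2 <|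
      (mem_insert.1 hj).elim le_of_eq fun hj => (mem_Ico.1 hj).2.le
  have hrow : ∀ i ∈ Ico a b, (if i < b then f (i, b) else 1) = f (i, b) :=
    fun i hi => if_pos (mem_Ico.1 hi).2
  rw [Icc_eq_cons_Ico hab, cons_eq_insert, prod_filter, prod_filter, prod_product, prod_product,
    prod_insert hb, hlast, one_mul]
  simp only [prod_insert hb]
  rw [prod_mul_distrib, prod_congr rfl hrow, mul_comm]

theorem stmt_7_general {K : Type*} [Field K] (n : ℕ) (t : K) (x : Fin n → K)
    (ht : t ≠ 0) (hinj : Function.Injective x) :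
    ∀ i j : Fin n, i ≤ j →
      (∑ k ∈ Finset.Icc i j, t ^ ((j : ℤ) - (k : ℤ)) *
          (t ^ ((k : ℤ) - (j : ℤ)) * (∏ m ∈ Finset.Ioc k j, (x m - t * x j)) /
            ∏ m ∈ Finset.Ico k j, (x m - x j))) =
        ((∏ p ∈ (Finset.Ico i j ×ˢ Finset.Ico i j).filter fun p => p.1 < p.2,
            (x p.2 - x p.1)) * ∏ m ∈ Finset.Ico i j, (t * x j - x m)) /
          ∏ p ∈ (Finset.Icc i j ×ˢ Finset.Icc i j).filter fun p => p.1 < p.2,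
            (x p.2 - x p.1) := by
  intro i j hij
  have hpow (k : Fin n) (A B : K) : t ^ ((j : ℤ) - k) * (t ^ ((k : ℤ) - j) * A / B) = A / B := by
    rw [mul_div_assoc, ← mul_assoc, ← zpow_add₀ ht, sub_add_sub_cancel, sub_self, zpow_zero,
      one_mul]
  have hvandermonde : ∏ p ∈ (Ico i j ×ˢ Ico i j).filter (fun p => p.1 < p.2), (x p.2 - x p.1) ≠ 0 :=
    prod_ne_zero_iff.2 fun p hp => sub_ne_zero.2 (hinj.ne (mem_filter.1 hp).2.ne')
  rw [sum_congr rfl fun k _ => hpow k _ _,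
    Fin.sum_prod_Ioc_div_prod_Ico x (t * x j) hij fun k hk => hinj.ne (mem_Ico.1 hk).2.ne,
    prod_filter_lt_Icc_product_Icc (fun p => x p.2 - x p.1) hij, mul_div_mul_left _ _ hvandermonde,
    ← prod_div_distrib]
  exact prod_congr rfl fun m _ => by rw [← neg_sub (x m), ← neg_sub (x m) (x j), neg_div_neg_eq]

/-- with `G⁺_{kj} = t^{k-j} Π_{k<m≤j}(x_m - t x_j) / Π_{k≤m<j}(x_m - x_j)`,
one has `Σ_{i≤k≤j} t^{j-k} G⁺_{kj} = Δ(x_i,…,x_{j-1},t x_j)/Δ(x_i,…,x_j)`. -/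
theorem stmt_7 {K : Type*} [Field K] (n : ℕ) (t : K) (x : Fin n → K)
    (ht : t ≠ 0) (hx0 : ∀ i, x i ≠ 0) (hinj : Function.Injective x)
    (htx : ∀ k i, t * x k ≠ x i) :
    ∀ i j : Fin n, i ≤ j →
      (∑ k ∈ Finset.Icc i j, t ^ ((j : ℤ) - (k : ℤ)) *
          (t ^ ((k : ℤ) - (j : ℤ)) * (∏ m ∈ Finset.Ioc k j, (x m - t * x j)) /
            ∏ m ∈ Finset.Ico k j, (x m - x j))) =
        ((∏ p ∈ (Finset.Ico i j ×ˢ Finset.Ico i j).filter fun p => p.1 < p.2,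
            (x p.2 - x p.1)) * ∏ m ∈ Finset.Ico i j, (t * x j - x m)) /
          ∏ p ∈ (Finset.Icc i j ×ˢ Finset.Icc i j).filter fun p => p.1 < p.2,
            (x p.2 - x p.1) :=
  stmt_7_general n t x ht hinj
end

section
/- Define for 1 ≤ i ≤ j ≤ n the rational function F_{ij}(x,ξ;t) = t^{i-j}(1-t)² Σ_{i≤k≤j} ξ_k · x_k x_j Δ(x_i,…,t x_k,…,x_j) / ((t x_k - x_i)(t x_k - x_j) Δ(x_i,…,x_j)). Then F_{jj} = ξ_j, and for i < j the recurrence F_{ij} = ((1-t)/(t(1 - x_i x_j^{-1}))) · ( Σ_{i≤k<j} F_{ik} − Σ_{i<k≤j} x_k x_j^{-1} F_{kj} ) holds. -/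
/-
Expanding `F_{ij} = Σ_m ξ_m c_{ij}^m` makes everything linear in `ξ`, and the Vandermonde quotient
becomes `W_{ij}^m = ∏_{l ≠ m} (t x_m - x_l) / (x_m - x_l)`. For `a ≤ m ≤ b` the partial sums
telescope:
  `Σ_{m ≤ k ≤ b} c_{ak}^m = (t - 1) x_m t^{a-b} W_{ab}^m / (t x_m - x_a)`,
  `Σ_{a ≤ k ≤ m} x_k x_b⁻¹ c_{kb}^m = (t - 1) x_m t^{a-b} W_{ab}^m / (t x_m - x_b)`,
and the difference of the two right-hand sides is `(1 - x_a x_b⁻¹) c_{ab}^m / (1 - t)`. This is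
the recurrence with both sums over the closed interval `[i, j]`; splitting off the endpoint terms
`F_{ij}` and `x_i x_j⁻¹ F_{ij}` gives the stated form.
-/

open Finset

theorem Fin.sum_Icc_eq_of_sub_succ {M : Type*} [AddCommGroup M] {n : ℕ} (f Φ : Fin n → M)
    {m : Fin n} (hm : f m = Φ m) (hstep : ∀ k l : Fin n, m ≤ k → (l : ℕ) = k + 1 → f l = Φ l - Φ k)
    {b : Fin n} (hmb : m ≤ b) : ∑ k ∈ Icc m b, f k = Φ b := by
  obtain ⟨B, hB⟩ := b
  induction B with
  | zero =>
    obtain rfl : m = ⟨0, hB⟩ := by simp only [Fin.ext_iff, Fin.le_def] at hmb ⊢; omega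
    simp [hm]
  | succ B ih =>
    rcases eq_or_lt_of_le hmb with rfl | hlt
    · simp [hm]
    have hmB : m ≤ ⟨B, by omega⟩ := by simp only [Fin.le_def, Fin.lt_def] at hlt ⊢; omega
    have hset : Icc m ⟨B + 1, hB⟩ = insert ⟨B + 1, hB⟩ (Icc m ⟨B, by omega⟩) := by
      ext l; simp only [mem_Icc, mem_insert, Fin.ext_iff, Fin.le_def] at hmB ⊢; omega
    rw [hset, sum_insert (by simp only [mem_Icc, Fin.le_def, not_and_or]; omega), ih _ hmB,
      hstep _ _ hmB rfl]
    abel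

theorem Fin.sum_Icc_eq_of_sub_pred {M : Type*} [AddCommGroup M] {n : ℕ} (f Ψ : Fin n → M)
    {m : Fin n} (hm : f m = Ψ m) (hstep : ∀ k l : Fin n, k ≤ m → (l : ℕ) + 1 = k → f l = Ψ l - Ψ k)
    {a : Fin n} (ham : a ≤ m) : ∑ k ∈ Icc a m, f k = Ψ a := by
  have := Fin.sum_Icc_eq_of_sub_succ (f ∘ Fin.rev) (Ψ ∘ Fin.rev) (m := m.rev) (by simpa using hm)
    (fun k l hk hl => hstep _ _ (by simp only [Fin.le_def, Fin.val_rev] at hk ⊢; omega)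
      (by simp only [Fin.val_rev]; omega))
    (Fin.rev_le_rev.mpr ham)
  simpa [← Fin.map_revPerm_Icc] using this

theorem prod_pairs_sub_of_eq_off {ι K : Type*} [LinearOrder ι] [Field K] (s : Finset ι)
    {g g' : ι → K} (hg : Set.InjOn g s) {k : ι} (hk : k ∈ s) (hg' : ∀ l, l ≠ k → g' l = g l) :
    ∏ p ∈ (s ×ˢ s).filter (fun p => p.1 < p.2), (g' p.2 - g' p.1) =
      (∏ p ∈ (s ×ˢ s).filter (fun p => p.1 < p.2), (g p.2 - g p.1)) *
        ∏ l ∈ s.erase k, (g' k - g l) / (g k - g l) := by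
  set P := (s ×ˢ s).filter (fun p => p.1 < p.2)
  have hP : ∀ p, p ∈ P ↔ p.1 ∈ s ∧ p.2 ∈ s ∧ p.1 < p.2 := by simp [P, and_assoc]
  have hd : ∀ p ∈ P, g p.2 - g p.1 ≠ 0 := fun p hp => by
    obtain ⟨h1, h2, h12⟩ := (hP p).1 hp
    exact sub_ne_zero.2 fun h => h12.ne' (hg h2 h1 h)
  set q : ι × ι → K := fun p => (g' p.2 - g' p.1) / (g p.2 - g p.1)
  -- every pair through `k` is `(min l k, max l k)` for exactly one `l ≠ k`
  set e : ι → ι × ι := fun l => (min l k, max l k)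
  have he : ∀ l ∈ s.erase k, e l ∈ P ∧ q (e l) = (g' k - g l) / (g k - g l) := by
    intro l hl
    obtain ⟨hlk, hls⟩ := mem_erase.1 hl
    rcases hlk.lt_or_gt with h | h
    · simp only [e, q, min_eq_left h.le, max_eq_right h.le, hP, hg' l hlk]
      exact ⟨⟨hls, hk, h⟩, trivial⟩
    · simp only [e, q, min_eq_right h.le, max_eq_left h.le, hP, hg' l hlk]
      exact ⟨⟨hk, hls, h⟩, by rw [← neg_sub, ← neg_sub (g k), neg_div_neg_eq]⟩
  have hq : ∏ p ∈ P, q p = ∏ l ∈ s.erase k, (g' k - g l) / (g k - g l) := by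
    have hinj : Set.InjOn e (s.erase k) := by
      intro l hl l' hl' h
      simp only [e, Prod.ext_iff] at h
      rcases (ne_of_mem_erase hl).lt_or_gt with h1 | h1 <;>
        rcases (ne_of_mem_erase hl').lt_or_gt with h2 | h2 <;>
        simp_all [le_of_lt]
    rw [← prod_subset (s₁ := (s.erase k).image e), prod_image hinj]
    · exact prod_congr rfl fun l hl => (he l hl).2
    · exact image_subset_iff.2 fun l hl => (he l hl).1
    · intro p hp hpe
      obtain ⟨h1, h2, h12⟩ := (hP p).1 hp
      have hp1 : p.1 ≠ k := fun h => hpe <| mem_image.2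
        ⟨p.2, mem_erase.2 ⟨h ▸ h12.ne', h2⟩, by simp [e, ← h, h12.le]⟩
      have hp2 : p.2 ≠ k := fun h => hpe <| mem_image.2
        ⟨p.1, mem_erase.2 ⟨h ▸ h12.ne, h1⟩, by simp [e, ← h, h12.le]⟩
      simp only [q, hg' _ hp1, hg' _ hp2, div_self (hd p hp)]
  calc _ = ∏ p ∈ P, (g p.2 - g p.1) * q p :=
        prod_congr rfl fun p hp => (mul_div_cancel₀ _ (hd p hp)).symm
    _ = _ := by rw [prod_mul_distrib, hq]

namespace VandermondeEntry

variable {K : Type*} [Field K] {n : ℕ} (t : K) (x : Fin n → K)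

noncomputable def deltaRatio (a b m : Fin n) : K :=
  ∏ l ∈ (Icc a b).erase m, (t * x m - x l) / (x m - x l)

noncomputable def entryCoeff (a b m : Fin n) : K :=
  t ^ ((a : ℤ) - (b : ℤ)) * (1 - t) ^ 2 * (x m * x b * deltaRatio t x a b m) /
    ((t * x m - x a) * (t * x m - x b))

theorem deltaRatio_succ_right {a m k l : Fin n} (hak : a ≤ k) (hmk : m ≤ k) (hl : (l : ℕ) = k + 1) :
    deltaRatio t x a l m = deltaRatio t x a k m * ((t * x m - x l) / (x m - x l)) := by
  have hset : (Icc a l).erase m = insert l ((Icc a k).erase m) := by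
    ext j; simp only [mem_erase, mem_insert, mem_Icc, Fin.ext_iff, Fin.le_def] at hak hmk ⊢; omega
  rw [deltaRatio, hset, prod_insert (by simp only [mem_erase, mem_Icc, Fin.le_def]; omega),
    mul_comm, deltaRatio]

theorem deltaRatio_pred_left {b m k l : Fin n} (hkb : k ≤ b) (hkm : k ≤ m) (hl : (l : ℕ) + 1 = k) :
    deltaRatio t x l b m = (t * x m - x l) / (x m - x l) * deltaRatio t x k b m := by
  have hset : (Icc l b).erase m = insert l ((Icc k b).erase m) := by
    ext j; simp only [mem_erase, mem_insert, mem_Icc, Fin.ext_iff, Fin.le_def] at hkb hkm ⊢; omega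
  rw [deltaRatio, hset, prod_insert (by simp only [mem_erase, mem_Icc, Fin.le_def]; omega),
    deltaRatio]

variable {t x}

theorem sum_Icc_entryCoeff_right (ht : t ≠ 0) (hinj : Function.Injective x)
    (htx : ∀ k l, t * x k ≠ x l) {a m b : Fin n} (ham : a ≤ m) (hmb : m ≤ b) :
    ∑ k ∈ Icc m b, entryCoeff t x a k m =
      (t - 1) * x m * t ^ ((a : ℤ) - (b : ℤ)) * deltaRatio t x a b m / (t * x m - x a) := by
  have hma : t * x m - x a ≠ 0 := sub_ne_zero.2 (htx m a)
  refine Fin.sum_Icc_eq_of_sub_succ _ (fun b => (t - 1) * x m * t ^ ((a : ℤ) - (b : ℤ)) *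
    deltaRatio t x a b m / (t * x m - x a)) ?_ (fun k l hmk hl => ?_) hmb
  · obtain ⟨ht1, hm0⟩ := mul_ne_zero_iff.1
      (by rw [sub_one_mul, sub_ne_zero]; exact htx m m : (t - 1) * x m ≠ 0)
    rw [entryCoeff]
    field_simp
    ring
  · have hml : x m - x l ≠ 0 := sub_ne_zero.2 (hinj.ne (Fin.ne_of_lt (by omega)))
    have hml' : t * x m - x l ≠ 0 := sub_ne_zero.2 (htx m l)
    rw [entryCoeff, deltaRatio_succ_right t x (ham.trans hmk) hmk hl,
      show ((a : ℕ) : ℤ) - l = (a : ℤ) - k - 1 by omega, zpow_sub_one₀ ht]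
    field_simp
    ring

theorem sum_Icc_entryCoeff_left (ht : t ≠ 0) (hinj : Function.Injective x)
    (htx : ∀ k l, t * x k ≠ x l) {a m b : Fin n} (hb : x b ≠ 0) (ham : a ≤ m) (hmb : m ≤ b) :
    ∑ k ∈ Icc a m, x k * (x b)⁻¹ * entryCoeff t x k b m =
      (t - 1) * x m * t ^ ((a : ℤ) - (b : ℤ)) * deltaRatio t x a b m / (t * x m - x b) := by
  have hmb' : t * x m - x b ≠ 0 := sub_ne_zero.2 (htx m b)
  refine Fin.sum_Icc_eq_of_sub_pred _ (fun a => (t - 1) * x m * t ^ ((a : ℤ) - (b : ℤ)) *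
    deltaRatio t x a b m / (t * x m - x b)) ?_ (fun k l hkm hl => ?_) ham
  · obtain ⟨ht1, hm0⟩ := mul_ne_zero_iff.1
      (by rw [sub_one_mul, sub_ne_zero]; exact htx m m : (t - 1) * x m ≠ 0)
    rw [entryCoeff]
    field_simp
    ring
  · have hml : x m - x l ≠ 0 := sub_ne_zero.2 (hinj.ne (Fin.ne_of_gt (by omega)))
    have hml' : t * x m - x l ≠ 0 := sub_ne_zero.2 (htx m l)
    rw [entryCoeff, deltaRatio_pred_left t x (by omega) (by omega) hl,
      show ((l : ℕ) : ℤ) - b = (k : ℤ) - b - 1 by omega, zpow_sub_one₀ ht]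
    field_simp
    ring

theorem entryCoeff_recurrence (ht : t ≠ 0) (hinj : Function.Injective x)
    (htx : ∀ k l, t * x k ≠ x l) {a m b : Fin n} (hb : x b ≠ 0) (ham : a ≤ m) (hmb : m ≤ b) :
    (1 - x a * (x b)⁻¹) * entryCoeff t x a b m =
      (1 - t) * (∑ k ∈ Icc m b, entryCoeff t x a k m -
        ∑ k ∈ Icc a m, x k * (x b)⁻¹ * entryCoeff t x k b m) := by
  have hma : t * x m - x a ≠ 0 := sub_ne_zero.2 (htx m a)
  have hmb' : t * x m - x b ≠ 0 := sub_ne_zero.2 (htx m b)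
  rw [sum_Icc_entryCoeff_right ht hinj htx ham hmb, sum_Icc_entryCoeff_left ht hinj htx hb ham hmb,
    entryCoeff]
  field_simp
  ring

variable (t x) in
noncomputable def entry (ξ : Fin n → K) (i j : Fin n) : K :=
  ∑ m ∈ Icc i j, ξ m * entryCoeff t x i j m

theorem entry_self (ξ : Fin n → K) (j : Fin n) (h : t * x j ≠ x j) : entry t x ξ j j = ξ j := by
  obtain ⟨ht1, hj0⟩ := mul_ne_zero_iff.1 (by rwa [sub_one_mul, sub_ne_zero] : (t - 1) * x j ≠ 0)
  simp only [entry, Icc_self, sum_singleton, entryCoeff, deltaRatio, erase_singleton, prod_empty,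
    sub_self, zpow_zero]
  field_simp
  ring

theorem entry_recurrence_Icc (ht : t ≠ 0) (hinj : Function.Injective x)
    (htx : ∀ k l, t * x k ≠ x l) (ξ : Fin n → K) (i : Fin n) {j : Fin n} (hj : x j ≠ 0) :
    (1 - x i * (x j)⁻¹) * entry t x ξ i j =
      (1 - t) * (∑ k ∈ Icc i j, entry t x ξ i k -
        ∑ k ∈ Icc i j, x k * (x j)⁻¹ * entry t x ξ k j) := by
  have hleft : ∑ k ∈ Icc i j, entry t x ξ i k =
      ∑ m ∈ Icc i j, ξ m * ∑ k ∈ Icc m j, entryCoeff t x i k m := by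
    simp only [entry, mul_sum]
    exact sum_comm' fun k m => by simp only [mem_Icc]; omega
  have hright : ∑ k ∈ Icc i j, x k * (x j)⁻¹ * entry t x ξ k j =
      ∑ m ∈ Icc i j, ξ m * ∑ k ∈ Icc i m, x k * (x j)⁻¹ * entryCoeff t x k j m := by
    simp only [entry, mul_sum]
    rw [sum_comm' (t' := Icc i j) (s' := fun m => Icc i m) fun k m => by simp only [mem_Icc]; omega]
    exact sum_congr rfl fun m _ => sum_congr rfl fun k _ => by ring
  rw [hleft, hright, entry, mul_sum, ← sum_sub_distrib, mul_sum]
  refine sum_congr rfl fun m hm => ?_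
  obtain ⟨him, hmj⟩ := mem_Icc.1 hm
  rw [mul_left_comm, entryCoeff_recurrence ht hinj htx hj him hmj]
  ring

theorem entry_recurrence (ht : t ≠ 0) (hinj : Function.Injective x)
    (htx : ∀ k l, t * x k ≠ x l) (ξ : Fin n → K) {i j : Fin n} (hj : x j ≠ 0) (hij : i < j) :
    entry t x ξ i j = (1 - t) / (t * (1 - x i * (x j)⁻¹)) *
      ((∑ k ∈ Ico i j, entry t x ξ i k) - ∑ k ∈ Ioc i j, x k * (x j)⁻¹ * entry t x ξ k j) := by
  have h := entry_recurrence_Icc ht hinj htx ξ i hj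
  rw [← add_sum_Ico_eq_sum_Icc hij.le, ← add_sum_Ioc_eq_sum_Icc hij.le] at h
  have hij' : 1 - x i * (x j)⁻¹ ≠ 0 := by
    rw [sub_ne_zero, ne_comm, ← div_eq_mul_inv, Ne, div_eq_one_iff_eq hj]
    exact hinj.ne hij.ne
  rw [div_mul_eq_mul_div, eq_div_iff (mul_ne_zero ht hij')]
  linear_combination h

theorem entry_eq_sum_div_prod (hinj : Function.Injective x) (ξ : Fin n → K) (i j : Fin n) :
    entry t x ξ i j =
      t ^ ((i : ℤ) - (j : ℤ)) * (1 - t) ^ 2 *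
        ∑ k ∈ Icc i j, ξ k *
          (x k * x j *
            ∏ p ∈ (Icc i j ×ˢ Icc i j).filter fun p => p.1 < p.2,
              ((if p.2 = k then t * x p.2 else x p.2) -
                (if p.1 = k then t * x p.1 else x p.1))) /
          ((t * x k - x i) * (t * x k - x j) *
            ∏ p ∈ (Icc i j ×ˢ Icc i j).filter fun p => p.1 < p.2,
              (x p.2 - x p.1)) := by
  have hP : ∏ p ∈ (Icc i j ×ˢ Icc i j).filter (fun p => p.1 < p.2), (x p.2 - x p.1) ≠ 0 :=
    prod_ne_zero_iff.2 fun p hp => sub_ne_zero.2 (hinj.ne (mem_filter.1 hp).2.ne')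
  rw [entry, mul_sum]
  refine sum_congr rfl fun k hk => ?_
  have h := prod_pairs_sub_of_eq_off (Icc i j) hinj.injOn hk
    (g' := fun l => if l = k then t * x l else x l) fun l hl => if_neg hl
  simp only [if_pos] at h
  rw [h, entryCoeff, deltaRatio]
  field_simp

end VandermondeEntry

open VandermondeEntry

/-- the matrix entries
`F_{ij}(x,ξ;t) = t^{i-j}(1-t)² Σ_{i≤k≤j} ξ_k x_k x_j Δ(x_i,…,t x_k,…,x_j) /
((t x_k - x_i)(t x_k - x_j) Δ(x_i,…,x_j))`
satisfy `F_{jj} = ξ_j` and the recurrence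
`F_{ij} = ((1-t)/(t(1 - x_i x_j⁻¹))) (Σ_{i≤k<j} F_{ik} − Σ_{i<k≤j} x_k x_j⁻¹ F_{kj})`. -/
theorem stmt_8 {K : Type*} [Field K] (n : ℕ) (t : K) (x ξ : Fin n → K)
    (ht : t ≠ 0) (hx0 : ∀ i, x i ≠ 0) (hinj : Function.Injective x)
    (htx : ∀ k i, t * x k ≠ x i)
    (F : Fin n → Fin n → K)
    (hF : ∀ i j : Fin n, F i j =
      t ^ ((i : ℤ) - (j : ℤ)) * (1 - t) ^ 2 *
        ∑ k ∈ Finset.Icc i j, ξ k *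
          (x k * x j *
            ∏ p ∈ (Finset.Icc i j ×ˢ Finset.Icc i j).filter fun p => p.1 < p.2,
              ((if p.2 = k then t * x p.2 else x p.2) -
                (if p.1 = k then t * x p.1 else x p.1))) /
          ((t * x k - x i) * (t * x k - x j) *
            ∏ p ∈ (Finset.Icc i j ×ˢ Finset.Icc i j).filter fun p => p.1 < p.2,
              (x p.2 - x p.1))) :
    (∀ j, F j j = ξ j) ∧
      ∀ i j : Fin n, i < j →
        F i j = (1 - t) / (t * (1 - x i * (x j)⁻¹)) *
          ((∑ k ∈ Finset.Ico i j, F i k) -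
            ∑ k ∈ Finset.Ioc i j, x k * (x j)⁻¹ * F k j) := by
  obtain rfl : F = entry t x ξ :=
    funext₂ fun i j => (hF i j).trans (entry_eq_sum_div_prod hinj ξ i j).symm
  exact ⟨fun j => entry_self ξ j (htx j j),
    fun i j hij => entry_recurrence ht hinj htx ξ (hx0 j) hij⟩
end

section
/- For every upper triangular n×n matrix F (over ℚ(t,x_1,…,x_n)) commuting with A(x;t) = A(t)·diag(x_1,…,x_n), the off-diagonal entries of F are uniquely determined by its diagonal entries; in particular the space of upper triangular matrices commuting with A(x;t) has dimension n. -/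
open Finset

section aux

variable {K : Type*} [Field K] {n : ℕ}

/-- The defining matrix entries of `A(x;t)`. -/
private lemma entry_iff (t : K) (x : Fin n → K)
    (A : Matrix (Fin n) (Fin n) K)
    (hA : A = Matrix.of fun i j : Fin n =>
      (if i = j then 1 else if i < j then 1 - t⁻¹ else 0) * x j)
    (F : Matrix (Fin n) (Fin n) K) (i j : Fin n) :
    (F * A) i j = (A * F) i j ↔
      (x j - x i) * F i j = (1 - t⁻¹) *
        ((∑ k ∈ Finset.univ.filter (fun k => i < k), x k * F k j)
          - x j * ∑ k ∈ Finset.univ.filter (fun k => k < j), F i k) := by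
  subst hA
  rw [Matrix.mul_apply, Matrix.mul_apply]
  simp only [Matrix.of_apply]
  have h1 : ∑ k : Fin n, F i k * ((if k = j then (1:K) else if k < j then 1 - t⁻¹ else 0) * x j)
      = F i j * x j + (1 - t⁻¹) * x j * ∑ k ∈ Finset.univ.filter (fun k => k < j), F i k := by
    have hpt : ∀ k : Fin n, F i k * ((if k = j then (1:K) else if k < j then 1 - t⁻¹ else 0) * x j)
        = (if k = j then F i j * x j else 0) + (if k < j then (1 - t⁻¹) * F i k * x j else 0) := by
      intro k
      rcases lt_trichotomy k j with h | h | h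
      · simp only [if_neg h.ne, if_pos h]; ring
      · subst h; simp
      · simp [h.ne', not_lt_of_gt h]
    rw [Finset.sum_congr rfl fun k _ => hpt k, Finset.sum_add_distrib,
      Finset.sum_ite_eq' Finset.univ j (fun _ => F i j * x j)]
    simp only [Finset.mem_univ, if_true]
    rw [← Finset.sum_filter]
    congr 1
    rw [Finset.mul_sum]
    exact Finset.sum_congr rfl fun k _ => by ring
  have h2 : ∑ k : Fin n, ((if i = k then (1:K) else if i < k then 1 - t⁻¹ else 0) * x k) * F k j
      = x i * F i j + (1 - t⁻¹) * ∑ k ∈ Finset.univ.filter (fun k => i < k), x k * F k j := by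
    have hpt : ∀ k : Fin n, ((if i = k then (1:K) else if i < k then 1 - t⁻¹ else 0) * x k) * F k j
        = (if k = i then x i * F i j else 0) + (if i < k then (1 - t⁻¹) * (x k * F k j) else 0) := by
      intro k
      rcases lt_trichotomy i k with h | h | h
      · simp only [if_neg h.ne, if_pos h, if_neg h.ne']; ring
      · subst h; simp
      · simp [h.ne', h.ne, not_lt_of_gt h]
    rw [Finset.sum_congr rfl fun k _ => hpt k, Finset.sum_add_distrib,
      Finset.sum_ite_eq' Finset.univ i (fun _ => x i * F i j)]
    simp only [Finset.mem_univ, if_true]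
    rw [← Finset.sum_filter, Finset.mul_sum]
  rw [h1, h2]
  constructor <;> intro h <;> linear_combination h

/-- Recursive construction of the commuting matrix with prescribed diagonal. -/
private noncomputable def cF (t : K) (x : Fin n → K) (d : Fin n → K)
    (i j : Fin n) : K :=
  if h : j ≤ i then (if i = j then d i else 0)
  else ((1 - t⁻¹) / (x j - x i)) *
    ((∑ k ∈ (Finset.univ.filter (fun k : Fin n => i < k)).attach, x k.1 * cF t x d k.1 j)
      - x j * ∑ k ∈ (Finset.univ.filter (fun k : Fin n => k < j)).attach, cF t x d i k.1)
termination_by (j.val - i.val)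
decreasing_by
  · have hk := k.2
    simp only [Finset.mem_filter, Finset.mem_univ, true_and, Fin.lt_def] at hk
    simp only [not_le, Fin.lt_def] at h
    omega
  · have hk := k.2
    simp only [Finset.mem_filter, Finset.mem_univ, true_and, Fin.lt_def] at hk
    simp only [not_le, Fin.lt_def] at h
    omega

private lemma cF_lower (t : K) (x d : Fin n → K) {i j : Fin n} (h : j < i) :
    cF t x d i j = 0 := by
  rw [cF, dif_pos h.le, if_neg h.ne']

private lemma cF_diag (t : K) (x d : Fin n → K) (i : Fin n) :
    cF t x d i i = d i := by
  rw [cF, dif_pos le_rfl, if_pos rfl]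

private lemma cF_rec (t : K) (x d : Fin n → K) {i j : Fin n} (h : i < j)
    (hx : x j ≠ x i) :
    (x j - x i) * cF t x d i j = (1 - t⁻¹) *
      ((∑ k ∈ Finset.univ.filter (fun k => i < k), x k * cF t x d k j)
        - x j * ∑ k ∈ Finset.univ.filter (fun k => k < j), cF t x d i k) := by
  rw [cF, dif_neg (not_le.mpr h), Finset.sum_attach _ (fun k => x k * cF t x d k j),
    Finset.sum_attach _ (fun k => cF t x d i k)]
  field_simp [sub_ne_zero.mpr hx]
  try ring

/-- Uniqueness: any two upper-triangular matrices commuting with `A` and having the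
same diagonal are equal. -/
private lemma comm_unique (t : K) (x : Fin n → K) (hinj : Function.Injective x)
    (A : Matrix (Fin n) (Fin n) K)
    (hA : A = Matrix.of fun i j : Fin n =>
      (if i = j then 1 else if i < j then 1 - t⁻¹ else 0) * x j)
    (F G : Matrix (Fin n) (Fin n) K)
    (hFt : ∀ i j : Fin n, j < i → F i j = 0) (hFc : F * A = A * F)
    (hGt : ∀ i j : Fin n, j < i → G i j = 0) (hGc : G * A = A * G)
    (hd : ∀ i, F i i = G i i) : F = G := by
  have key : ∀ m : ℕ, ∀ i j : Fin n, j.val - i.val = m → F i j = G i j := by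
    intro m
    induction m using Nat.strong_induction_on with
    | _ m ih =>
      intro i j hm
      rcases lt_trichotomy i j with hij | hij | hij
      · -- i < j, use the recursion identity
        have hxij : x j ≠ x i := fun hc => absurd (hinj hc) hij.ne'
        have hF := (entry_iff t x A hA F i j).mp (by rw [hFc])
        have hG := (entry_iff t x A hA G i j).mp (by rw [hGc])
        have hS1 : (∑ k ∈ Finset.univ.filter (fun k => i < k), x k * F k j)
            = ∑ k ∈ Finset.univ.filter (fun k => i < k), x k * G k j := by
          apply Finset.sum_congr rfl
          intro k hk
          simp only [Finset.mem_filter, Finset.mem_univ, true_and] at hk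
          rcases lt_or_ge j k with hkj | hkj
          · rw [hFt k j hkj, hGt k j hkj]
          · have : F k j = G k j := by
              apply ih (j.val - k.val) _ k j rfl
              have hik : i.val < k.val := hk
              have : i.val < j.val := hij
              omega
            rw [this]
        have hS2 : (∑ k ∈ Finset.univ.filter (fun k => k < j), F i k)
            = ∑ k ∈ Finset.univ.filter (fun k => k < j), G i k := by
          apply Finset.sum_congr rfl
          intro k hk
          simp only [Finset.mem_filter, Finset.mem_univ, true_and] at hk
          rcases lt_or_ge k i with hki | hki
          · rw [hFt i k hki, hGt i k hki]
          · have : F i k = G i k := by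
              apply ih (k.val - i.val) _ i k rfl
              have hkj : k.val < j.val := hk
              have : i.val < j.val := hij
              omega
            rw [this]
        have heq : (x j - x i) * F i j = (x j - x i) * G i j := by
          rw [hF, hG, hS1, hS2]
        have hne : x j - x i ≠ 0 := sub_ne_zero.mpr hxij
        exact mul_left_cancel₀ hne heq
      · rw [hij]; exact hd j
      · rw [hFt i j hij, hGt i j hij]
  ext i j
  exact key (j.val - i.val) i j rfl

end aux

/-- every upper triangular matrix commuting with `A(x;t) = A(t)·diag(x)` is
uniquely determined by its diagonal entries, and every diagonal occurs; in particular the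
space of upper triangular matrices commuting with `A(x;t)` has dimension `n`. -/
theorem stmt_12 {K : Type*} [Field K] (n : ℕ) (t : K) (x : Fin n → K)
    (ht : t ≠ 0) (hx0 : ∀ i, x i ≠ 0) (hinj : Function.Injective x)
    (A : Matrix (Fin n) (Fin n) K)
    (hA : A = Matrix.of fun i j : Fin n =>
      (if i = j then 1 else if i < j then 1 - t⁻¹ else 0) * x j) :
    ∀ d : Fin n → K, ∃! F : Matrix (Fin n) (Fin n) K,
      (∀ i j : Fin n, j < i → F i j = 0) ∧ F * A = A * F ∧ ∀ i, F i i = d i := by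
  intro d
  set F : Matrix (Fin n) (Fin n) K := Matrix.of (cF t x d) with hFdef
  have hFt : ∀ i j : Fin n, j < i → F i j = 0 := fun i j h => cF_lower t x d h
  have hFd : ∀ i, F i i = d i := fun i => cF_diag t x d i
  have hFc : F * A = A * F := by
    ext i j
    rw [entry_iff t x A hA F i j]
    rcases lt_or_ge i j with hij | hij
    · have hxij : x j ≠ x i := fun hc => absurd (hinj hc) hij.ne'
      exact cF_rec t x d hij hxij
    · -- both sides vanish
      have hS1 : (∑ k ∈ Finset.univ.filter (fun k => i < k), x k * F k j) = 0 := by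
        apply Finset.sum_eq_zero
        intro k hk
        simp only [Finset.mem_filter, Finset.mem_univ, true_and] at hk
        rw [hFt k j (lt_of_le_of_lt hij hk), mul_zero]
      have hS2 : (∑ k ∈ Finset.univ.filter (fun k => k < j), F i k) = 0 := by
        apply Finset.sum_eq_zero
        intro k hk
        simp only [Finset.mem_filter, Finset.mem_univ, true_and] at hk
        rw [hFt i k (lt_of_lt_of_le hk hij)]
      rw [hS1, hS2]
      rcases eq_or_lt_of_le hij with heq | hlt
      · rw [heq]; ring
      · rw [hFt i j hlt]; ring
  refine ⟨F, ⟨hFt, hFc, hFd⟩, ?_⟩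
  rintro G ⟨hGt, hGc, hGd⟩
  exact comm_unique t x hinj A hA G F hGt hGc hFt hFc (fun i => by rw [hGd i, hFd i])
end

section
/- Let μ = (μ_1 ≥ … ≥ μ_n ≥ 0) be a partition and λ = 2μ = (2μ_1,…,2μ_n) its horizontal duplication. Then the principal specialization of the Schur polynomial satisfies s_λ(q^{2(n-1)}, q^{2(n-2)},…,1) = q^{4Σ_{k=1}^n (k-1)μ_k} · Π_{s∈μ} [ (1−q^{2(2a'(s)−ℓ'(s)+n)})(1−q^{2(2a'(s)−ℓ'(s)+n+1)}) / ((1−q^{2(2a(s)+ℓ(s)+1)})(1−q^{2(2a(s)+ℓ(s)+2)})) ]. -/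
/-!
Doubling every row of `μ` splits box `(i, j)` of `μ` into the boxes `(i, 2j)` and `(i, 2j+1)` of
`λ = 2μ`. Both lie in a column of length `μ'_j`, their contents are `2j - i` and `2j + 1 - i`, and
their arms are `2a + 1` and `2a`, so their hooks are `2a + ℓ + 2` and `2a + ℓ + 1`. Pairing the
factors of the hook–content formula for `λ` in this way gives the product over `μ`.
-/

noncomputable section

/-- The conjugate partition: `ν'_{j+1} = #{i : ν_i > j}` (0-based `j`). -/
def conjP (m : ℕ) (ν : Fin m → ℕ) (j : ℕ) : ℕ :=
  (Finset.univ.filter fun i : Fin m => j < ν i).card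

/-- The principal specialization `s_ν(q^{2(m-1)},…,q^2,1)` of the Schur polynomial in `m`
variables, via the hook–content formula
`s_ν(1,Q,…,Q^{m-1}) = Q^{Σ(k-1)ν_k} Π_{p∈ν} (1−Q^{c(p)})/(1−Q^{h(p)})` with `Q = q²`,
`c(p) = a'(p)−ℓ'(p)+m` and `h(p) = a(p)+ℓ(p)+1`. Boxes are 0-based pairs `(i,j)`. -/
noncomputable def schurPrincipal (m : ℕ) (ν : Fin m → ℕ) : K1 :=
  q1 ^ (2 * ∑ i : Fin m, (i : ℤ) * (ν i : ℤ)) *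
    ∏ i : Fin m, ∏ j ∈ Finset.range (ν i),
      (1 - q1 ^ (2 * ((j : ℤ) - (i : ℤ) + (m : ℤ)))) /
        (1 - q1 ^ (2 * (((ν i : ℤ) - (j : ℤ) - 1) + ((conjP m ν j : ℤ) - (i : ℤ) - 1) + 1)))

theorem Finset.prod_range_two_mul {M : Type*} [CommMonoid M] (m : ℕ) (f : ℕ → M) :
    ∏ j ∈ range (2 * m), f j = ∏ j ∈ range m, (f (2 * j) * f (2 * j + 1)) := by
  induction m with
  | zero => simp
  | succ k ih => rw [Nat.mul_succ, prod_range_succ, prod_range_succ, prod_range_succ, ih, mul_assoc]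

theorem conjP_two_mul (m : ℕ) (ν : Fin m → ℕ) (j : ℕ) :
    conjP m (fun i => 2 * ν i) j = conjP m ν (j / 2) := by
  unfold conjP
  congr 1
  exact Finset.filter_congr fun i _ => by dsimp only; omega

theorem stmt_14_general (n : ℕ) (μ : Fin n → ℕ) :
    schurPrincipal n (fun i => 2 * μ i) =
      q1 ^ (4 * ∑ i : Fin n, (i : ℤ) * (μ i : ℤ)) *
        ∏ i : Fin n, ∏ j ∈ Finset.range (μ i),
          ((1 - q1 ^ (2 * (2 * (j : ℤ) - (i : ℤ) + (n : ℤ)))) *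
              (1 - q1 ^ (2 * (2 * (j : ℤ) - (i : ℤ) + (n : ℤ) + 1)))) /
            ((1 - q1 ^ (2 * (2 * ((μ i : ℤ) - (j : ℤ) - 1) + ((conjP n μ j : ℤ) - (i : ℤ) - 1) + 1))) *
              (1 - q1 ^ (2 * (2 * ((μ i : ℤ) - (j : ℤ) - 1) + ((conjP n μ j : ℤ) - (i : ℤ) - 1) + 2)))) := by
  unfold schurPrincipal
  congr 1
  · rw [Finset.mul_sum, Finset.mul_sum]
    push_cast
    exact congrArg _ (Finset.sum_congr rfl fun i _ => by ring)
  · refine Finset.prod_congr rfl fun i _ => ?_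
    rw [Finset.prod_range_two_mul]
    refine Finset.prod_congr rfl fun j _ => ?_
    have hcol_even : (2 * j) / 2 = j := by omega
    have hcol_odd : (2 * j + 1) / 2 = j := by omega
    rw [conjP_two_mul, conjP_two_mul, hcol_even, hcol_odd, div_mul_div_comm]
    congr 1
    · congr 3
      push_cast
      ring
    · rw [mul_comm]
      congr 3 <;> push_cast <;> ring

/-- for a partition `μ` and its horizontal duplication `λ = 2μ`,
`s_λ(q^{2(n-1)},…,1) = q^{4Σ(k-1)μ_k} Π_{s∈μ}
(1−q^{2(2a'−ℓ'+n)})(1−q^{2(2a'−ℓ'+n+1)}) / ((1−q^{2(2a+ℓ+1)})(1−q^{2(2a+ℓ+2)}))`. -/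
theorem stmt_14 (n : ℕ) (μ : Fin n → ℕ) (hμ : Antitone μ) :
    schurPrincipal n (fun i => 2 * μ i) =
      q1 ^ (4 * ∑ i : Fin n, (i : ℤ) * (μ i : ℤ)) *
        ∏ i : Fin n, ∏ j ∈ Finset.range (μ i),
          ((1 - q1 ^ (2 * (2 * (j : ℤ) - (i : ℤ) + (n : ℤ)))) *
              (1 - q1 ^ (2 * (2 * (j : ℤ) - (i : ℤ) + (n : ℤ) + 1)))) /
            ((1 - q1 ^ (2 * (2 * ((μ i : ℤ) - (j : ℤ) - 1) + ((conjP n μ j : ℤ) - (i : ℤ) - 1) + 1))) *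
              (1 - q1 ^ (2 * (2 * ((μ i : ℤ) - (j : ℤ) - 1) + ((conjP n μ j : ℤ) - (i : ℤ) - 1) + 2)))) :=
  stmt_14_general n μ

end
end

section
/- The q-difference operator D = Σ_{k=1}^n Π_{j≠k} ((t x_k − x_j)/(x_k − x_j)) T_{q,x_k}, where (T_{q,x_k} f)(x) = f(x_1,…,q x_k,…,x_n), maps the ring of symmetric polynomials ℚ(q,t)[x_1,…,x_n]^{S_n} into itself. -/
/-!
Clear denominators with the Vandermonde determinant `V = ∏_{i<j} (x_j - x_i)`: it is divisible
by every `∏_{j≠k} (x_k - x_j)`, say with cofactor `E k`, so `V · Df = ∑ₖ aₖ E k` with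
`aₖ = ∏_{j≠k} (t x_k - x_j) · T_{q,x_k} f` a polynomial. The substitution `x_i ↦ x_j` kills
`E k` for `k ∉ {i, j}` (it kills `V` but not the denominator of index `k`), and it kills the two
remaining terms together, because it factors through the transposition `(i j)`, which swaps
`a_i` with `a_j` and `E i` with `-E j`. Hence every prime `x_i - x_j` divides `∑ₖ aₖ E k`, and so
does their product `V`; unlike an appeal to the antisymmetry of `V · Df`, this also works in
characteristic 2. Symmetry of `Df` is clear: a permutation of the variables permutes the
summands of `D`.
-/

open Finset

namespace MvPolynomial

variable {σ K : Type*} [CommRing K]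

theorem X_sub_X_ne_zero [Nontrivial K] {i j : σ} (hij : i ≠ j) :
    (X i - X j : MvPolynomial σ K) ≠ 0 :=
  sub_ne_zero.mpr fun h => hij (X_injective h)

variable [DecidableEq σ]

theorem X_sub_X_dvd_sub_rename_update (i j : σ) (p : MvPolynomial σ K) :
    X i - X j ∣ p - rename (Function.update id i j) p := by
  induction p using MvPolynomial.induction_on with
  | C a => simp
  | add p r hp hr =>
    convert dvd_add hp hr using 1
    rw [map_add]
    ring
  | mul_X p l hp =>
    have hl : (X i - X j : MvPolynomial σ K) ∣ X l - X (Function.update id i j l) := by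
      rcases eq_or_ne l i with rfl | h
      · simp
      · simp [h]
    rw [map_mul, rename_X]
    convert dvd_add (hp.mul_right (X l)) (hl.mul_left (rename (Function.update id i j) p)) using 1
    ring

theorem X_sub_X_dvd_iff {i j : σ} (hij : i ≠ j) {p : MvPolynomial σ K} :
    X i - X j ∣ p ↔ rename (Function.update id i j) p = 0 :=
  ⟨fun ⟨r, hr⟩ => by simp [hr, hij.symm],
    fun h => by simpa [h] using X_sub_X_dvd_sub_rename_update i j p⟩

theorem prime_X_sub_X [IsDomain K] {i j : σ} (hij : i ≠ j) :
    Prime (X i - X j : MvPolynomial σ K) := by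
  have hker : Ideal.span {X i - X j} = RingHom.ker (rename (R := K) (Function.update id i j)) := by
    ext p
    rw [Ideal.mem_span_singleton, RingHom.mem_ker, X_sub_X_dvd_iff hij]
  rw [← Ideal.span_singleton_prime (X_sub_X_ne_zero hij), hker]
  exact RingHom.ker_isPrime _

theorem isRelPrime_X_sub_X [IsDomain K] {a b c d : σ} (hab : a ≠ b) (hcd : c ≠ d)
    (h : s(a, b) ≠ s(c, d)) : IsRelPrime (X a - X b : MvPolynomial σ K) (X c - X d) := by
  rw [(prime_X_sub_X hab).irreducible.isRelPrime_iff_not_dvd, X_sub_X_dvd_iff hab]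
  rw [Ne, Sym2.eq_iff] at h
  simp only [map_sub, rename_X, sub_eq_zero, X_inj, Function.update_apply, id]
  split_ifs <;> grind

theorem prod_X_sub_X_dvd [IsDomain K] [UniqueFactorizationMonoid K] {ι : Type*} {s : Finset ι}
    {a b : ι → σ}
    (hab : ∀ i ∈ s, a i ≠ b i) (hs : Set.InjOn (fun i => s(a i, b i)) s)
    {p : MvPolynomial σ K} (hp : ∀ i ∈ s, rename (Function.update id (a i) (b i)) p = 0) :
    ∏ i ∈ s, (X (a i) - X (b i)) ∣ p :=
  prod_dvd_of_isRelPrime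
    (fun i hi i' hi' hne => isRelPrime_X_sub_X (hab i hi) (hab i' hi') fun h => hne (hs hi hi' h))
    fun i hi => (X_sub_X_dvd_iff (hab i hi)).2 (hp i hi)

theorem rename_update_rename_swap (i j : σ) (p : MvPolynomial σ K) :
    rename (Function.update id i j) (rename (Equiv.swap i j) p) =
      rename (Function.update id i j) p := by
  have h : Function.update id i j ∘ Equiv.swap i j = Function.update id i j := by
    funext l
    simp only [Function.comp_apply, Equiv.swap_apply_def, Function.update_apply, id]
    split_ifs <;> grind
  rw [rename_rename, h]

end MvPolynomial

theorem Equiv.Perm.prod_erase_univ_comp {α M : Type*} [Fintype α] [DecidableEq α] [CommMonoid M]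
    (τ : Equiv.Perm α) (k : α) (g : α → M) :
    ∏ j ∈ univ.erase k, g (τ j) = ∏ j ∈ univ.erase (τ k), g j :=
  prod_equiv τ (by simp) fun _ _ => rfl

namespace Macdonald

open MvPolynomial Equiv

variable {n : ℕ} {K : Type*} [CommRing K]

noncomputable def qShift (q : K) (k : Fin n) :
    MvPolynomial (Fin n) K →ₐ[K] MvPolynomial (Fin n) K :=
  aeval fun j => if j = k then C q * X k else X j

theorem rename_qShift (τ : Perm (Fin n)) (q : K) (k : Fin n) (f : MvPolynomial (Fin n) K) :
    rename τ (qShift q k f) = qShift q (τ k) (rename τ f) := by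
  rw [← AlgHom.comp_apply, ← AlgHom.comp_apply]
  congr 1
  refine algHom_ext fun l => ?_
  simp only [qShift, AlgHom.comp_apply, aeval_X, rename_X, apply_ite (rename τ), map_mul, rename_C,
    τ.injective.eq_iff]

noncomputable def num (t : K) (k : Fin n) : MvPolynomial (Fin n) K :=
  ∏ j ∈ univ.erase k, (C t * X k - X j)

noncomputable def den (k : Fin n) : MvPolynomial (Fin n) K :=
  ∏ j ∈ univ.erase k, (X k - X j)

theorem num_one (k : Fin n) : num (1 : K) k = den k := by
  simp [num, den]

theorem rename_num (τ : Perm (Fin n)) (t : K) (k : Fin n) :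
    rename τ (num t k) = num t (τ k) := by
  simp only [num, map_prod, map_sub, map_mul, rename_C, rename_X]
  exact τ.prod_erase_univ_comp k fun j => C t * X (τ k) - X j

theorem rename_den (τ : Perm (Fin n)) (k : Fin n) :
    rename τ (den k : MvPolynomial (Fin n) K) = den (τ k) := by
  rw [← num_one, rename_num, num_one]

variable (n K) in
noncomputable def vandermonde : MvPolynomial (Fin n) K :=
  (Matrix.vandermonde X).det

theorem rename_vandermonde_eq_det (f : Fin n → Fin n) :
    rename f (vandermonde n K) = (Matrix.vandermonde fun l => X (f l)).det := by
  rw [vandermonde, AlgHom.map_det]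
  congr 1
  ext i j
  simp [Matrix.vandermonde_apply]

theorem rename_vandermonde (τ : Perm (Fin n)) :
    rename τ (vandermonde n K) = Perm.sign τ * vandermonde n K := by
  rw [rename_vandermonde_eq_det, vandermonde, ← Matrix.det_permute]
  rfl

theorem rename_update_vandermonde {i j : Fin n} (hij : i ≠ j) :
    rename (Function.update id i j) (vandermonde n K) = 0 := by
  rw [rename_vandermonde_eq_det]
  exact Matrix.det_zero_of_row_eq hij (funext fun m => by simp [Matrix.vandermonde_apply, hij.symm])

theorem vandermonde_eq_prod :
    vandermonde n K =
      ∏ p ∈ univ.filter (fun p : Fin n × Fin n => p.1 < p.2), (X p.2 - X p.1) := by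
  rw [vandermonde, Matrix.det_vandermonde, prod_finset_product _ univ (fun i => Ioi i) (by simp)]

local notation "φ" => algebraMap (MvPolynomial (Fin n) K) (FractionRing (MvPolynomial (Fin n) K))

noncomputable def renameFrac (τ : Perm (Fin n)) :
    FractionRing (MvPolynomial (Fin n) K) ≃+* FractionRing (MvPolynomial (Fin n) K) :=
  IsFractionRing.ringEquivOfRingEquiv (renameEquiv K τ).toRingEquiv

theorem renameFrac_algebraMap (τ : Perm (Fin n)) (p : MvPolynomial (Fin n) K) :
    renameFrac τ (φ p) = φ (rename τ p) :=
  IsFractionRing.ringEquivOfRingEquiv_algebraMap _ p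

variable [IsDomain K]

theorem den_ne_zero (k : Fin n) : (den k : MvPolynomial (Fin n) K) ≠ 0 :=
  prod_ne_zero_iff.2 fun _ hj => X_sub_X_ne_zero (ne_of_mem_erase hj).symm

theorem vandermonde_ne_zero : vandermonde n K ≠ 0 :=
  Matrix.det_vandermonde_ne_zero_iff.2 X_injective

theorem den_dvd_vandermonde [UniqueFactorizationMonoid K] (k : Fin n) : den k ∣ vandermonde n K :=
  prod_X_sub_X_dvd (fun _ hj => (ne_of_mem_erase hj).symm) (fun _ _ _ _ h => Sym2.congr_right.1 h)
    fun _ hj => rename_update_vandermonde (ne_of_mem_erase hj).symm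

section Cofactor

variable {E : Fin n → MvPolynomial (Fin n) K}

theorem rename_cofactor (hE : ∀ k, vandermonde n K = den k * E k)
    (τ : Perm (Fin n)) (k : Fin n) :
    rename τ (E k) = Perm.sign τ * E (τ k) := by
  apply mul_left_cancel₀ (den_ne_zero (K := K) (τ k))
  calc den (τ k) * rename τ (E k) = rename τ (vandermonde n K) := by
        rw [hE k, map_mul, rename_den]
    _ = den (τ k) * (((Perm.sign τ : ℤ) : MvPolynomial (Fin n) K) * E (τ k)) := by
        rw [rename_vandermonde, hE (τ k)]
        ring

theorem rename_update_cofactor (hE : ∀ k, vandermonde n K = den k * E k)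
    {i j k : Fin n} (hij : i ≠ j) (hki : k ≠ i) (hkj : k ≠ j) :
    rename (Function.update id i j) (E k) = 0 := by
  have hden : rename (Function.update id i j) (den k : MvPolynomial (Fin n) K) ≠ 0 := by
    simp only [den, map_prod, map_sub, rename_X, Function.update_of_ne hki]
    refine prod_ne_zero_iff.2 fun l hl => X_sub_X_ne_zero ?_
    rcases eq_or_ne l i with rfl | hli
    · simpa using hkj
    · simpa [hli] using (ne_of_mem_erase hl).symm
  have h := rename_update_vandermonde (K := K) hij
  rw [hE k, map_mul] at h
  exact (mul_eq_zero.1 h).resolve_left hden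

theorem rename_update_sum_mul_cofactor (hE : ∀ k, vandermonde n K = den k * E k)
    {a : Fin n → MvPolynomial (Fin n) K}
    (ha : ∀ (τ : Perm (Fin n)) k, rename τ (a k) = a (τ k)) {i j : Fin n} (hij : i ≠ j) :
    rename (Function.update id i j) (∑ k, a k * E k) = 0 := by
  have ha' : rename (Function.update id i j) (a i) = rename (Function.update id i j) (a j) := by
    rw [← rename_update_rename_swap, ha, swap_apply_left]
  have hE' : rename (Function.update id i j) (E i) = -rename (Function.update id i j) (E j) := by
    rw [← rename_update_rename_swap, rename_cofactor hE, swap_apply_left, Perm.sign_swap hij]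
    simp
  rw [map_sum, ← sum_subset (subset_univ {i, j}), sum_pair hij, map_mul, map_mul, ha', hE']
  · ring
  · intro k _ hk
    simp only [mem_insert, mem_singleton, not_or] at hk
    rw [map_mul, rename_update_cofactor hE hij hk.1 hk.2, mul_zero]

theorem vandermonde_dvd_sum_mul_cofactor [UniqueFactorizationMonoid K]
    (hE : ∀ k, vandermonde n K = den k * E k)
    {a : Fin n → MvPolynomial (Fin n) K}
    (ha : ∀ (τ : Perm (Fin n)) k, rename τ (a k) = a (τ k)) :
    vandermonde n K ∣ ∑ k, a k * E k := by
  rw [vandermonde_eq_prod]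
  refine prod_X_sub_X_dvd (fun p hp => (mem_filter.1 hp).2.ne') ?_
    fun p hp => rename_update_sum_mul_cofactor hE ha (mem_filter.1 hp).2.ne'
  rintro ⟨i, j⟩ hp ⟨i', j'⟩ hp' h
  simp only [coe_filter, mem_univ, true_and, Set.mem_ofPred_eq] at hp hp'
  rcases Sym2.eq_iff.1 h with ⟨h₁, h₂⟩ | ⟨h₁, h₂⟩
  · exact Prod.ext h₂ h₁
  · subst h₁ h₂
    exact (lt_asymm hp hp').elim

end Cofactor

noncomputable def qDiffOp (q t : K) (f : MvPolynomial (Fin n) K) :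
    FractionRing (MvPolynomial (Fin n) K) :=
  ∑ k : Fin n, (∏ j ∈ univ.erase k, (φ (C t * X k - X j) / φ (X k - X j))) * φ (qShift q k f)

theorem qDiffOp_eq_sum_div (q t : K) (f : MvPolynomial (Fin n) K) :
    qDiffOp q t f = ∑ k, φ (num t k) / φ (den k) * φ (qShift q k f) := by
  simp only [qDiffOp, num, den, map_prod, prod_div_distrib]

theorem renameFrac_qDiffOp (τ : Perm (Fin n)) (q t : K) (f : MvPolynomial (Fin n) K) :
    renameFrac τ (qDiffOp q t f) = qDiffOp q t (rename τ f) := by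
  simp only [qDiffOp_eq_sum_div, map_sum, map_mul, map_div₀, renameFrac_algebraMap, rename_num,
    rename_den, rename_qShift]
  exact Equiv.sum_comp τ fun k => φ (num t k) / φ (den k) * φ (qShift q k (rename τ f))

theorem isSymmetric_of_algebraMap_eq_qDiffOp {q t : K} {f g : MvPolynomial (Fin n) K}
    (hf : f.IsSymmetric) (hg : φ g = qDiffOp q t f) :
    g.IsSymmetric := fun τ =>
  IsFractionRing.injective (MvPolynomial (Fin n) K) (FractionRing _) <| by
    rw [← renameFrac_algebraMap, hg, renameFrac_qDiffOp, hf τ]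

theorem exists_algebraMap_eq_qDiffOp [UniqueFactorizationMonoid K] (q t : K)
    {f : MvPolynomial (Fin n) K} (hf : f.IsSymmetric) : ∃ g, φ g = qDiffOp q t f := by
  choose E hE using den_dvd_vandermonde (K := K) (n := n)
  obtain ⟨g, hg⟩ := vandermonde_dvd_sum_mul_cofactor hE (a := fun k => num t k * qShift q k f)
    fun τ k => by rw [map_mul, rename_num, rename_qShift, hf τ]
  have hV : φ (vandermonde n K) ≠ 0 :=
    IsFractionRing.to_map_eq_zero_iff.not.2 vandermonde_ne_zero
  refine ⟨g, mul_left_cancel₀ hV ?_⟩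
  rw [← map_mul, ← hg, qDiffOp_eq_sum_div, mul_sum, map_sum]
  refine sum_congr rfl fun k _ => ?_
  have hden : φ (den k : MvPolynomial (Fin n) K) ≠ 0 :=
    IsFractionRing.to_map_eq_zero_iff.not.2 (den_ne_zero k)
  rw [hE k, map_mul, map_mul, map_mul]
  field_simp

end Macdonald

/-- the Macdonald q-difference operator
`D = Σ_k Π_{j≠k} ((t x_k − x_j)/(x_k − x_j)) T_{q,x_k}` maps symmetric polynomials to
symmetric polynomials: for symmetric `f`, `Df` is again (the image of) a symmetric
polynomial (the apparent poles along `x_k = x_j` cancel). -/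
theorem stmt_17 {K : Type*} [Field K] (q t : K) (n : ℕ)
    (f : MvPolynomial (Fin n) K) (hf : f.IsSymmetric) :
    ∃ g : MvPolynomial (Fin n) K, g.IsSymmetric ∧
      algebraMap (MvPolynomial (Fin n) K) (FractionRing (MvPolynomial (Fin n) K)) g =
        ∑ k : Fin n,
          (∏ j ∈ Finset.univ.erase k,
            (algebraMap (MvPolynomial (Fin n) K) (FractionRing (MvPolynomial (Fin n) K))
                (MvPolynomial.C t * MvPolynomial.X k - MvPolynomial.X j) /
              algebraMap (MvPolynomial (Fin n) K) (FractionRing (MvPolynomial (Fin n) K))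
                (MvPolynomial.X k - MvPolynomial.X j))) *
            algebraMap (MvPolynomial (Fin n) K) (FractionRing (MvPolynomial (Fin n) K))
              (MvPolynomial.aeval
                (fun j : Fin n => if j = k then MvPolynomial.C q * MvPolynomial.X k
                  else MvPolynomial.X j) f) := by
  obtain ⟨g, hg⟩ := Macdonald.exists_algebraMap_eq_qDiffOp q t hf
  exact ⟨g, Macdonald.isSymmetric_of_algebraMap_eq_qDiffOp hf hg, hg⟩
end
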